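/- arXiv:2601.04067 — 3 statements merged into one kernel-verified Lean document; each statement's English description precedes it below -/
import Mathlib

section
/- Let (Ω,𝓕,ℙ) be an atomless probability space and let ≿ be a continuous risk preference on L^∞ (a transitive, law-invariant binary relation such that for each X, both {Y : Y ≿ X} and {Y : X ≿ Y} are closed in the L^∞-norm). The following are equivalent: (i) risk neutrality, i.e., E[X] ≃ X for all X ∈ L^∞; (ii) diversification neutrality on identically distributed pairs; (iii) diversification neutrality on exchangeable pairs; (iv) diversification neutrality on antimonotonic and identically distributed pairs. -/
open MeasureTheory ProbabilityTheory Filter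
open scoped ENNReal

section Defs

variable {Ω : Type*} [MeasurableSpace Ω]

/-- The probability space is atomless. -/
def Atomless (μ : Measure Ω) : Prop :=
  ∀ s : Set Ω, MeasurableSet s → 0 < μ s →
    ∃ t : Set Ω, MeasurableSet t ∧ t ⊆ s ∧ 0 < μ t ∧ μ t < μ s

/-- `X` and `Y` are identically distributed. -/
def SameDist (μ : Measure Ω) (X Y : Ω → ℝ) : Prop :=
  Measure.map X μ = Measure.map Y μ

/-- `(X, Y)` is an antimonotonic pair. -/
def Antimonotonic (μ : Measure Ω) (X Y : Ω → ℝ) : Prop :=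
  ∀ᵐ p ∂(μ.prod μ), (X p.1 - X p.2) * (Y p.1 - Y p.2) ≤ 0

/-- `(X, Y)` is a comonotonic pair. -/
def Comonotonic (μ : Measure Ω) (X Y : Ω → ℝ) : Prop :=
  ∀ᵐ p ∂(μ.prod μ), 0 ≤ (X p.1 - X p.2) * (Y p.1 - Y p.2)

/-- `(X, Y)` is an exchangeable pair. -/
def Exchangeable (μ : Measure Ω) (X Y : Ω → ℝ) : Prop :=
  Measure.map (fun ω => (X ω, Y ω)) μ = Measure.map (fun ω => (Y ω, X ω)) μ

/-- `(X, Y)` is negatively quadrant dependent. -/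
def NQD (μ : Measure Ω) (X Y : Ω → ℝ) : Prop :=
  ∀ x y : ℝ, μ {ω | X ω ≤ x ∧ Y ω ≤ y} ≤ μ {ω | X ω ≤ x} * μ {ω | Y ω ≤ y}

/-- `X` dominates `Y` in the concave order. -/
def ConcaveOrdGE (μ : Measure Ω) (X Y : Ω → ℝ) : Prop :=
  ∀ u : ℝ → ℝ, ConcaveOn ℝ Set.univ u → (∫ ω, u (Y ω) ∂μ) ≤ ∫ ω, u (X ω) ∂μ

/-- The left quantile function `Q_X(t) = inf {x | P(X ≤ x) ≥ t}`. -/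
noncomputable def leftQuantile (μ : Measure Ω) (X : Ω → ℝ) (t : ℝ) : ℝ :=
  sInf {x : ℝ | t ≤ (μ {ω | X ω ≤ x}).toReal}

/-- The essential supremum `inf {x | P(Z > x) = 0}`. -/
noncomputable def essSupR (μ : Measure Ω) (Z : Ω → ℝ) : ℝ :=
  sInf {x : ℝ | μ {ω | x < Z ω} = 0}

/-- The essential infimum `sup {x | P(Z < x) = 0}`. -/
noncomputable def essInfR (μ : Measure Ω) (Z : Ω → ℝ) : ℝ :=
  sSup {x : ℝ | μ {ω | Z ω < x} = 0}

/-- The constant random variable `c`, as an element of `L^∞`. -/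
noncomputable def constLp (μ : Measure Ω) [IsFiniteMeasure μ] (c : ℝ) : Lp ℝ ∞ μ :=
  (memLp_const c).toLp (fun _ => c)

variable (μ : Measure Ω) [IsFiniteMeasure μ] (R : Lp ℝ ∞ μ → Lp ℝ ∞ μ → Prop)

/-- The relation is transitive. -/
def IsTrans' : Prop := ∀ X Y Z : Lp ℝ ∞ μ, R X Y → R Y Z → R X Z

/-- Law invariance: identically distributed payoffs are indifferent. -/
def LawInvariant : Prop :=
  ∀ X Y : Lp ℝ ∞ μ, SameDist μ (X : Ω → ℝ) (Y : Ω → ℝ) → R X Y ∧ R Y X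

/-- Upper semicontinuity: upper contour sets are `L^∞`-norm closed. -/
def NormUSC : Prop := ∀ X : Lp ℝ ∞ μ, IsClosed {Y : Lp ℝ ∞ μ | R Y X}

/-- Continuity: upper and lower contour sets are `L^∞`-norm closed. -/
def NormContinuous : Prop :=
  ∀ X : Lp ℝ ∞ μ, IsClosed {Y : Lp ℝ ∞ μ | R Y X} ∧ IsClosed {Y : Lp ℝ ∞ μ | R X Y}

/-- A set of `L^∞` payoffs is closed under bounded convergence (uniformly
bounded sequences converging almost surely). -/
def BddConvClosed (S : Set (Lp ℝ ∞ μ)) : Prop :=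
  ∀ (Y : ℕ → Lp ℝ ∞ μ) (Z : Lp ℝ ∞ μ), (∀ n, Y n ∈ S) →
    (∃ C : ℝ, ∀ n, ‖Y n‖ ≤ C) →
    (∀ᵐ ω ∂μ, Tendsto (fun n => (Y n : Ω → ℝ) ω) atTop (nhds ((Z : Ω → ℝ) ω))) →
    Z ∈ S

/-- Compact upper semicontinuity. -/
def CompactUSC : Prop := ∀ X : Lp ℝ ∞ μ, BddConvClosed μ {Y : Lp ℝ ∞ μ | R Y X}

/-- Compact continuity. -/
def CompactCont : Prop :=
  ∀ X : Lp ℝ ∞ μ,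
    BddConvClosed μ {Y : Lp ℝ ∞ μ | R Y X} ∧ BddConvClosed μ {Y : Lp ℝ ∞ μ | R X Y}

/-- Diversification on the class of pairs satisfying `P`. -/
def DiversificationOn (P : Lp ℝ ∞ μ → Lp ℝ ∞ μ → Prop) : Prop :=
  ∀ X Y : Lp ℝ ∞ μ, P X Y → R X Y → R Y X →
    ∀ l : ℝ, 0 ≤ l → l ≤ 1 → R (l • X + (1 - l) • Y) Y

/-- Anti-diversification on the class of pairs satisfying `P`. -/
def AntiDiversificationOn (P : Lp ℝ ∞ μ → Lp ℝ ∞ μ → Prop) : Prop :=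
  ∀ X Y : Lp ℝ ∞ μ, P X Y → R X Y → R Y X →
    ∀ l : ℝ, 0 ≤ l → l ≤ 1 → R X (l • X + (1 - l) • Y)

/-- Diversification neutrality on the class of pairs satisfying `P`. -/
def DiversificationNeutralOn (P : Lp ℝ ∞ μ → Lp ℝ ∞ μ → Prop) : Prop :=
  DiversificationOn μ R P ∧ AntiDiversificationOn μ R P

/-- Weak risk aversion: `E[X] ≿ X`. -/
def WeakRiskAverse : Prop :=
  ∀ X : Lp ℝ ∞ μ, R (constLp μ (∫ ω, (X : Ω → ℝ) ω ∂μ)) X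

/-- Strong risk aversion: `X ≥_cv Y` implies `X ≿ Y`. -/
def StrongRiskAverse : Prop :=
  ∀ X Y : Lp ℝ ∞ μ, ConcaveOrdGE μ (X : Ω → ℝ) (Y : Ω → ℝ) → R X Y

/-- Risk neutrality: `E[X] ≃ X`. -/
def RiskNeutral : Prop :=
  ∀ X : Lp ℝ ∞ μ, R (constLp μ (∫ ω, (X : Ω → ℝ) ω ∂μ)) X ∧
    R X (constLp μ (∫ ω, (X : Ω → ℝ) ω ∂μ))

end Defs


namespace RNAux
open Set ProbabilityTheory
open scoped Topology

variable {Ω : Type*} [MeasurableSpace Ω] {μ : Measure Ω}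


variable {μ : Measure Ω}

/-- small positive subsets -/
lemma small_pos [IsFiniteMeasure μ] (hat : Atomless μ) :
    ∀ (A : Set Ω), MeasurableSet A → 0 < μ A → ∀ ε : ℝ≥0∞, 0 < ε →
      ∃ B : Set Ω, MeasurableSet B ∧ B ⊆ A ∧ 0 < μ B ∧ μ B ≤ ε := by
  intro A hA hApos ε hε
  have half : ∀ B : Set Ω, MeasurableSet B → 0 < μ B →
      ∃ C : Set Ω, MeasurableSet C ∧ C ⊆ B ∧ 0 < μ C ∧ μ C ≤ μ B * 2⁻¹ := by
    intro B hB hBpos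
    obtain ⟨t, ht, htB, htpos, htlt⟩ := hat B hB hBpos
    have hdiff : μ (B \ t) = μ B - μ t := measure_diff htB ht.nullMeasurableSet (measure_ne_top μ t)
    have h2 : μ B * 2⁻¹ = μ B / 2 := by rw [ENNReal.div_eq_inv_mul, mul_comm]
    rcases le_or_gt (μ t) (μ B / 2) with h | h
    · exact ⟨t, ht, htB, htpos, by rw [h2]; exact h⟩
    · refine ⟨B \ t, hB.diff ht, Set.diff_subset, ?_, ?_⟩
      · rw [hdiff]; exact tsub_pos_of_lt htlt
      · rw [hdiff, h2]
        calc μ B - μ t ≤ μ B - μ B / 2 := tsub_le_tsub_left h.le _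
        _ = μ B / 2 := ENNReal.sub_half (measure_ne_top μ B)
  have iter : ∀ n : ℕ, ∃ B : Set Ω, MeasurableSet B ∧ B ⊆ A ∧ 0 < μ B ∧ μ B ≤ μ A * 2⁻¹ ^ n := by
    intro n
    induction n with
    | zero => exact ⟨A, hA, subset_rfl, hApos, by simp⟩
    | succ n ih =>
      obtain ⟨B, hB, hBA, hBpos, hBle⟩ := ih
      obtain ⟨C, hC, hCB, hCpos, hCle⟩ := half B hB hBpos
      refine ⟨C, hC, hCB.trans hBA, hCpos, hCle.trans ?_⟩
      rw [pow_succ, ← mul_assoc]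
      exact mul_le_mul_left hBle _
  obtain ⟨n, hn⟩ : ∃ n : ℕ, μ A * 2⁻¹ ^ n ≤ ε := by
    obtain ⟨n, hn⟩ := ENNReal.exists_inv_two_pow_lt (a := ε / (μ A + 1)) (by
      simp only [ne_eq, ENNReal.div_eq_zero_iff, not_or]
      exact ⟨hε.ne', by simp [measure_ne_top]⟩)
    refine ⟨n, ?_⟩
    calc μ A * 2⁻¹ ^ n ≤ μ A * (ε / (μ A + 1)) := mul_le_mul_right hn.le _
    _ ≤ (μ A + 1) * (ε / (μ A + 1)) := mul_le_mul_left le_self_add _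
    _ ≤ ε := ENNReal.mul_div_le
  obtain ⟨B, hB, hBA, hBpos, hBle⟩ := iter n
  exact ⟨B, hB, hBA, hBpos, hBle.trans hn⟩

/-- Sierpiński: atomless measures attain all intermediate values. -/
theorem sierpinski [IsFiniteMeasure μ] (hat : Atomless μ) (A : Set Ω) (hA : MeasurableSet A)
    (c : ℝ≥0∞) (hc : c ≤ μ A) :
    ∃ B : Set Ω, MeasurableSet B ∧ B ⊆ A ∧ μ B = c := by
  classical
  let good : Set Ω → Prop := fun B => MeasurableSet B ∧ B ⊆ A ∧ μ B ≤ c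
  have hstep : ∀ B : Set Ω, good B → ∃ B' : Set Ω, good B' ∧ B ⊆ B' ∧
      ∀ D : Set Ω, MeasurableSet D → D ⊆ A \ B → μ D ≤ c - μ B → μ B + μ D / 2 ≤ μ B' := by
    intro B hB
    set s : ℝ≥0∞ := ⨆ (D : Set Ω) (_ : MeasurableSet D ∧ D ⊆ A \ B ∧ μ D ≤ c - μ B), μ D with hs
    rcases eq_or_ne s 0 with h0 | h0
    · refine ⟨B, hB, subset_rfl, ?_⟩
      intro D hD hDA hDc
      have : μ D ≤ s := le_iSup₂_of_le D ⟨hD, hDA, hDc⟩ le_rfl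
      rw [h0] at this
      simp only [nonpos_iff_eq_zero] at this
      simp [this]
    · have hstop : s ≠ ⊤ := by
        have : s ≤ μ A := iSup₂_le fun D hD => measure_mono (hD.2.1.trans Set.diff_subset)
        exact (this.trans_lt (measure_lt_top μ A)).ne
      have hslt : s / 2 < s := ENNReal.half_lt_self h0 hstop
      obtain ⟨D, hD, hDgt⟩ : ∃ D : Set Ω,
          (MeasurableSet D ∧ D ⊆ A \ B ∧ μ D ≤ c - μ B) ∧ s / 2 < μ D := by
        by_contra h
        push_neg at h
        have : s ≤ s / 2 := iSup₂_le fun D hD => h D hD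
        exact absurd (this.trans_lt hslt) (lt_irrefl _)
      have hdisj : Disjoint B D :=
        Set.disjoint_of_subset_right hD.2.1 Set.disjoint_sdiff_right
      refine ⟨B ∪ D, ⟨hB.1.union hD.1,
        Set.union_subset hB.2.1 (hD.2.1.trans Set.diff_subset), ?_⟩,
        Set.subset_union_left, ?_⟩
      · rw [measure_union hdisj hD.1]
        calc μ B + μ D ≤ μ B + (c - μ B) := add_le_add_right hD.2.2 _
        _ ≤ c := by
            rcases le_total (μ B) c with h | h
            · rw [add_tsub_cancel_of_le h]
            · simp only [tsub_eq_zero_of_le h, add_zero]; exact hB.2.2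
      · intro E hE hEA hEc
        have hEs : μ E ≤ s := le_iSup₂_of_le E ⟨hE, hEA, hEc⟩ le_rfl
        rw [measure_union hdisj hD.1]
        exact add_le_add_right ((ENNReal.div_le_div_right hEs 2).trans hDgt.le) _
  choose step hgood hsub hkey using hstep
  have h0 : good ∅ := ⟨MeasurableSet.empty, Set.empty_subset _, by simp⟩
  let seq : ℕ → {B : Set Ω // good B} := fun n =>
    Nat.rec ⟨∅, h0⟩ (fun _ p => ⟨step p.1 p.2, hgood p.1 p.2⟩) n
  have seq_succ : ∀ n, (seq (n+1)).1 = step (seq n).1 (seq n).2 := fun n => rfl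
  have seq_mono : Monotone (fun n => (seq n).1) := by
    refine monotone_nat_of_le_succ fun n => ?_
    rw [seq_succ]; exact hsub _ _
  set B : Set Ω := ⋃ n, (seq n).1 with hB
  have hBmeas : MeasurableSet B := MeasurableSet.iUnion fun n => (seq n).2.1
  have hBsub : B ⊆ A := Set.iUnion_subset fun n => (seq n).2.2.1
  have hBle : μ B ≤ c := by
    rw [hB, (directed_of_isDirected_le seq_mono).measure_iUnion]
    exact iSup_le fun n => (seq n).2.2.2
  refine ⟨B, hBmeas, hBsub, le_antisymm hBle ?_⟩
  by_contra hlt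
  push_neg at hlt
  have hpos : 0 < c - μ B := tsub_pos_of_lt hlt
  have hABpos : 0 < μ (A \ B) := by
    have h1 : μ (A \ B) = μ A - μ B :=
      measure_diff hBsub hBmeas.nullMeasurableSet (measure_ne_top μ B)
    rw [h1]; exact tsub_pos_of_lt (lt_of_lt_of_le hlt hc)
  obtain ⟨D, hDmeas, hDsub, hDpos, hDle⟩ :=
    small_pos hat (A \ B) (hA.diff hBmeas) hABpos (c - μ B) hpos
  have hgrow : ∀ n : ℕ, (n : ℝ≥0∞) * (μ D / 2) ≤ μ (seq n).1 := by
    intro n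
    induction n with
    | zero => simp
    | succ n ih =>
      have hDn : D ⊆ A \ (seq n).1 :=
        hDsub.trans (Set.diff_subset_diff_right (Set.subset_iUnion (fun n => ((seq n).1 : Set Ω)) n))
      have hDcn : μ D ≤ c - μ (seq n).1 :=
        hDle.trans (tsub_le_tsub_left (measure_mono (Set.subset_iUnion (fun n => ((seq n).1 : Set Ω)) n)) c)
      have hk := hkey (seq n).1 (seq n).2 D hDmeas hDn hDcn
      rw [← seq_succ] at hk
      calc ((n+1 : ℕ) : ℝ≥0∞) * (μ D / 2) = (n : ℝ≥0∞) * (μ D / 2) + μ D / 2 := by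
            push_cast; ring
      _ ≤ μ (seq n).1 + μ D / 2 := add_le_add_left ih _
      _ ≤ μ (seq (n+1)).1 := hk
  have hDhalf : 0 < μ D / 2 := ENNReal.div_pos hDpos.ne' (by norm_num)
  have hDhalf_top : μ D / 2 ≠ ⊤ := by
    exact (lt_of_le_of_lt (ENNReal.half_le_self) (measure_lt_top μ D)).ne
  obtain ⟨m, hm⟩ := ENNReal.exists_nat_gt (r := μ A / (μ D / 2))
    (ENNReal.div_lt_top (measure_ne_top μ A) hDhalf.ne').ne
  have hcon : (m : ℝ≥0∞) * (μ D / 2) ≤ μ A := (hgrow m).trans (measure_mono (seq m).2.2.1)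
  rw [ENNReal.div_lt_iff (Or.inl hDhalf.ne') (Or.inl hDhalf_top)] at hm
  exact absurd (lt_of_le_of_lt hcon hm) (lt_irrefl _)


/-- The uniform measure on `[0,1]`. -/
noncomputable def unif : Measure ℝ := (volume : Measure ℝ).restrict (Set.Icc 0 1)

instance : IsProbabilityMeasure (unif) := ⟨by
  rw [unif, Measure.restrict_apply MeasurableSet.univ, Set.univ_inter, Real.volume_Icc]
  norm_num⟩

/-- Row property for the dyadic filtration. -/
def RowP (μ : Measure Ω) (n : ℕ) (f : ℕ → Set Ω) : Prop :=
  (∀ k, MeasurableSet (f k)) ∧ Monotone f ∧ f 0 = ∅ ∧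
    (∀ k, 2 ^ n ≤ k → f k = Set.univ) ∧
    (∀ k, k ≤ 2 ^ n → μ (f k) = ENNReal.ofReal ((k : ℝ) / 2 ^ n))

theorem exists_uniform [IsProbabilityMeasure μ] (hat : Atomless μ) :
    ∃ U : Ω → ℝ, Measurable U ∧ (∀ ω, U ω ∈ Set.Icc (0:ℝ) 1) ∧
      Measure.map U μ = unif := by
  classical
  -- base row
  have hbase : RowP μ 0 (fun k => if k = 0 then ∅ else Set.univ) := by
    refine ⟨fun k => ?_, ?_, by simp, fun k hk => by
      have : k ≠ 0 := by omega
      simp [this], fun k hk => ?_⟩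
    · by_cases h : k = 0 <;> simp [h]
    · intro i j hij
      by_cases hi : i = 0
      · simp [hi]
      · have hj : j ≠ 0 := by omega
        simp [hi, hj]
    · interval_cases k <;> simp
  -- step
  have hstep : ∀ n (f : ℕ → Set Ω), RowP μ n f →
      ∃ g : ℕ → Set Ω, RowP μ (n+1) g ∧ ∀ j, g (2*j) = f j := by
    intro n f hf
    obtain ⟨hmeas, hmono, h0, htop, hμ⟩ := hf
    -- choose the new half-pieces
    have hS : ∀ j : ℕ, ∃ T : Set Ω, MeasurableSet T ∧ T ⊆ f (j+1) \ f j ∧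
        (j < 2^n → μ T = ENNReal.ofReal (1 / 2 ^ (n+1))) := by
      intro j
      by_cases hj : j < 2^n
      · have hdm : MeasurableSet (f (j+1) \ f j) := (hmeas _).diff (hmeas _)
        have hdiff : μ (f (j+1) \ f j) = ENNReal.ofReal (1 / 2 ^ n) := by
          rw [measure_diff (hmono (Nat.le_succ j)) (hmeas j).nullMeasurableSet
            (measure_ne_top μ _), hμ (j+1) hj, hμ j hj.le]
          rw [← ENNReal.ofReal_sub _ (by positivity)]
          congr 1
          push_cast
          field_simp
          ring
        obtain ⟨T, hT, hTsub, hTμ⟩ := sierpinski hat (f (j+1) \ f j) hdm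
          (ENNReal.ofReal (1 / 2 ^ (n+1)))
          (by rw [hdiff]
              apply ENNReal.ofReal_le_ofReal
              rw [one_div, one_div]
              apply inv_anti₀ (by positivity)
              apply pow_le_pow_right₀ (by norm_num) (Nat.le_succ n))
        exact ⟨T, hT, hTsub, fun _ => hTμ⟩
      · exact ⟨∅, MeasurableSet.empty, Set.empty_subset _, fun h => absurd h hj⟩
    choose S hSmeas hSsub hSμ using hS
    set g : ℕ → Set Ω := fun k =>
      if 2^(n+1) ≤ k then Set.univ else if k % 2 = 0 then f (k/2) else f (k/2) ∪ S (k/2)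
      with hg
    have hgeven : ∀ j, g (2*j) = f j := by
      intro j
      by_cases hj : 2^(n+1) ≤ 2*j
      · have h2 : 2^(n+1) = 2^n * 2 := pow_succ 2 n
        have : 2^n ≤ j := by omega
        simp only [hg, if_pos hj]
        exact (htop j this).symm
      · simp only [hg, if_neg hj]
        have : (2*j) % 2 = 0 := by omega
        rw [if_pos this, Nat.mul_div_cancel_left j (by norm_num)]
    have hgodd : ∀ j, 2*j+1 < 2^(n+1) → g (2*j+1) = f j ∪ S j := by
      intro j hj
      simp only [hg, if_neg (by omega : ¬ 2^(n+1) ≤ 2*j+1)]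
      have h1 : (2*j+1) % 2 ≠ 0 := by omega
      rw [if_neg h1]
      have h2 : (2*j+1)/2 = j := by omega
      rw [h2]
    refine ⟨g, ⟨?_, ?_, ?_, ?_, ?_⟩, hgeven⟩
    · intro k
      simp only [hg]
      split
      · exact MeasurableSet.univ
      · split
        · exact hmeas _
        · exact (hmeas _).union (hSmeas _)
    · refine monotone_nat_of_le_succ fun k => ?_
      by_cases hk1 : 2^(n+1) ≤ k + 1
      · simp only [hg, if_pos hk1]
        split <;> simp
      · have hk : k + 1 < 2^(n+1) := by omega
        rcases Nat.even_or_odd k with ⟨j, hj⟩ | ⟨j, hj⟩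
        · subst hj
          rw [show j + j = 2*j by ring] at *
          rw [hgeven j, hgodd j (by omega)]
          exact Set.subset_union_left
        · subst hj
          rw [hgodd j (by omega), show 2*j+1+1 = 2*(j+1) by ring, hgeven (j+1)]
          refine Set.union_subset (hmono (Nat.le_succ j)) ((hSsub j).trans Set.diff_subset)
    · have := hgeven 0
      simpa using this.trans h0
    · intro k hk
      simp only [hg, if_pos hk]
    · intro k hk
      rcases eq_or_lt_of_le hk with hk' | hk'
      · subst hk'
        simp only [hg, if_pos le_rfl]
        rw [measure_univ]
        rw [ENNReal.ofReal_eq_one.mpr]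
        field_simp
        norm_num
      · rcases Nat.even_or_odd k with ⟨j, hj⟩ | ⟨j, hj⟩
        · subst hj
          rw [show j + j = 2*j by ring] at *
          rw [hgeven j]
          have hj2 : j ≤ 2^n := by
            have h2 : 2^(n+1) = 2^n * 2 := pow_succ 2 n
            omega
          rw [hμ j hj2]
          congr 1
          push_cast
          rw [pow_succ]
          field_simp
        · subst hj
          rw [show 2*j+1 = 2*j+1 by rfl] at *
          rw [hgodd j hk']
          have hj2 : j < 2^n := by
            have h2 : 2^(n+1) = 2^n * 2 := pow_succ 2 n
            omega
          have hdisj : Disjoint (f j) (S j) :=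
            Set.disjoint_of_subset_right (hSsub j) Set.disjoint_sdiff_right
          rw [measure_union hdisj (hSmeas j), hμ j hj2.le, hSμ j hj2,
            ← ENNReal.ofReal_add (by positivity) (by positivity)]
          congr 1
          push_cast
          rw [pow_succ]
          field_simp
  -- build all rows
  choose step hstepP hstepE using hstep
  let rows : (n : ℕ) → {f : ℕ → Set Ω // RowP μ n f} := fun n =>
    Nat.rec ⟨_, hbase⟩ (fun n p => ⟨step n p.1 p.2, hstepP n p.1 p.2⟩) n
  set A : ℕ → ℕ → Set Ω := fun n k => (rows n).1 k with hA
  have hAP : ∀ n, RowP μ n (A n) := fun n => (rows n).2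
  have hAeven : ∀ n j, A (n+1) (2*j) = A n j := fun n j => hstepE n (rows n).1 (rows n).2 j
  -- counting functions
  set cnt : ℕ → Ω → ℕ := fun n ω => ∑ k ∈ Finset.Icc 1 (2^n), if ω ∈ A n k then 0 else 1
    with hcnt
  have hchar : ∀ n j ω, j + 1 ≤ 2^n → (cnt n ω ≤ j ↔ ω ∈ A n (j+1)) := by
    intro n j ω hj
    constructor
    · intro h
      by_contra hmem
      have hge : j + 1 ≤ cnt n ω := by
        have hsub : Finset.Icc 1 (j+1) ⊆ Finset.Icc 1 (2^n) := Finset.Icc_subset_Icc le_rfl hj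
        have h1 : ∀ k ∈ Finset.Icc 1 (j+1), (if ω ∈ A n k then 0 else 1) = 1 := by
          intro k hk
          rw [if_neg]
          intro hmem'
          exact hmem ((hAP n).2.1 (Finset.mem_Icc.mp hk).2 hmem')
        calc j + 1 = ∑ k ∈ Finset.Icc 1 (j+1), 1 := by simp
        _ = ∑ k ∈ Finset.Icc 1 (j+1), (if ω ∈ A n k then 0 else 1) :=
            (Finset.sum_congr rfl h1).symm
        _ ≤ cnt n ω := Finset.sum_le_sum_of_subset hsub
      omega
    · intro hmem
      have hle : cnt n ω ≤ ∑ k ∈ Finset.Icc 1 (2^n), if k ≤ j then 1 else 0 := by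
        refine Finset.sum_le_sum fun k _ => ?_
        by_cases hk : ω ∈ A n k
        · simp [hk]
        · rw [if_neg hk, if_pos]
          by_contra hkj
          exact hk ((hAP n).2.1 (by omega : j + 1 ≤ k) hmem)
      rw [Finset.sum_boole] at hle
      refine hle.trans ?_
      have : Finset.filter (fun k => k ≤ j) (Finset.Icc 1 (2^n)) ⊆ Finset.Icc 1 j := by
        intro k hk
        simp only [Finset.mem_filter, Finset.mem_Icc] at hk ⊢
        omega
      calc ((Finset.filter (fun k => k ≤ j) (Finset.Icc 1 (2^n))).card : ℕ)
          ≤ (Finset.Icc 1 j).card := Finset.card_le_card this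
      _ = j := by simp
  have hbound : ∀ n ω, cnt n ω ≤ 2^n - 1 := by
    intro n ω
    rw [hchar n (2^n - 1) ω (by have := Nat.one_le_two_pow (n := n); omega)]
    rw [show 2^n - 1 + 1 = 2^n by have := Nat.one_le_two_pow (n := n); omega]
    rw [(hAP n).2.2.2.1 _ le_rfl]
    trivial
  have hup : ∀ n ω, cnt (n+1) ω ≤ 2 * cnt n ω + 1 := by
    intro n ω
    have h1 : cnt n ω + 1 ≤ 2^n := by have := hbound n ω; have := Nat.one_le_two_pow (n := n); omega
    have hmem : ω ∈ A n (cnt n ω + 1) := (hchar n _ ω h1).mp le_rfl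
    rw [hchar (n+1) _ ω (by have h2 : 2^(n+1) = 2^n * 2 := pow_succ 2 n; omega)]
    rw [show 2 * cnt n ω + 1 + 1 = 2 * (cnt n ω + 1) by ring, hAeven]
    exact hmem
  have hlo : ∀ n ω, 2 * cnt n ω ≤ cnt (n+1) ω := by
    intro n ω
    set j' := cnt (n+1) ω with hj'
    have hb' : j' + 1 ≤ 2^(n+1) := by
      have := hbound (n+1) ω
      have := Nat.one_le_two_pow (n := n+1)
      omega
    have hmem : ω ∈ A (n+1) (j'+1) := (hchar (n+1) j' ω hb').mp le_rfl
    have hisub : A (n+1) (j'+1) ⊆ A (n+1) (2 * (j'/2 + 1)) := (hAP (n+1)).2.1 (by omega)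
    rw [hAeven] at hisub
    have hile : j'/2 + 1 ≤ 2^n := by
      have h2 : 2^(n+1) = 2^n * 2 := pow_succ 2 n
      omega
    have : cnt n ω ≤ j'/2 := by
      rw [hchar n _ ω hile]
      exact hisub hmem
    omega
  -- the approximating sequence
  set Useq : ℕ → Ω → ℝ := fun n ω => (cnt n ω : ℝ) / 2^n with hUseq
  have hUmeas : ∀ n, Measurable (Useq n) := by
    intro n
    apply Measurable.div_const
    exact measurable_from_top.comp (f := fun ω => cnt n ω)
      (Finset.measurable_sum _ fun k _ => Measurable.ite ((hAP n).1 k) measurable_const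
        measurable_const)
  have hUmono : ∀ ω, Monotone (fun n => Useq n ω) := by
    intro ω
    refine monotone_nat_of_le_succ fun n => ?_
    simp only [hUseq]
    have hc : (2:ℝ) * (cnt n ω : ℝ) ≤ (cnt (n+1) ω : ℝ) := by exact_mod_cast hlo n ω
    rw [div_le_div_iff₀ (by positivity) (by positivity)]
    calc (cnt n ω : ℝ) * 2^(n+1) = (2 * (cnt n ω : ℝ)) * 2^n := by ring
    _ ≤ (cnt (n+1) ω : ℝ) * 2^n :=
        mul_le_mul_of_nonneg_right hc (by positivity)
  have hUstep : ∀ n ω, Useq (n+1) ω ≤ Useq n ω + 1 / 2^(n+1) := by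
    intro n ω
    simp only [hUseq]
    have hc : (cnt (n+1) ω : ℝ) ≤ 2 * (cnt n ω : ℝ) + 1 := by exact_mod_cast hup n ω
    calc (cnt (n+1) ω : ℝ) / 2^(n+1) ≤ (2 * (cnt n ω : ℝ) + 1) / 2^(n+1) := by
          gcongr
    _ = (cnt n ω : ℝ) / 2^n + 1 / 2^(n+1) := by field_simp; ring
  have hU01 : ∀ n ω, Useq n ω ∈ Set.Icc (0:ℝ) (1 - 1/2^n) := by
    intro n ω
    constructor
    · positivity
    · simp only [hUseq]
      rw [div_le_iff₀ (by positivity)]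
      have hb := hbound n ω
      have h1 : (1:ℕ) ≤ 2^n := Nat.one_le_two_pow
      have hcle : (cnt n ω : ℝ) ≤ (2:ℝ)^n - 1 := by
        have h2 : (cnt n ω : ℝ) ≤ ((2^n - 1 : ℕ) : ℝ) := by exact_mod_cast hb
        refine h2.trans ?_
        rw [Nat.cast_sub h1]
        push_cast
        norm_num
      have hp : (0:ℝ) < 2^n := by positivity
      calc (cnt n ω : ℝ) ≤ (2:ℝ)^n - 1 := hcle
      _ = 1 * 2^n - 1 := by ring
      _ ≤ (1 - 1/2^n) * 2^n := by
          rw [sub_mul, one_mul, div_mul_cancel₀ _ hp.ne']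
  set U : Ω → ℝ := fun ω => ⨆ n, Useq n ω with hU
  have hbdd : ∀ ω, BddAbove (Set.range fun n => Useq n ω) := by
    intro ω
    refine ⟨1, ?_⟩
    rintro x ⟨n, rfl⟩
    refine (hU01 n ω).2.trans ?_
    have : (0:ℝ) < 1/2^n := by positivity
    linarith
  have htends : ∀ ω, Tendsto (fun n => Useq n ω) atTop (𝓝 (U ω)) := fun ω =>
    tendsto_atTop_ciSup (hUmono ω) (hbdd ω)
  have hUmeasfin : Measurable U :=
    measurable_of_tendsto_metrizable' atTop hUmeas (tendsto_pi_nhds.mpr htends)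
  have hUleft : ∀ n ω, Useq n ω ≤ U ω := fun n ω => le_ciSup (hbdd ω) n
  have hUnonneg : ∀ ω, 0 ≤ U ω := fun ω => le_trans (hU01 0 ω).1 (hUleft 0 ω)
  have hUle1 : ∀ ω, U ω ≤ 1 := by
    intro ω
    refine ciSup_le fun n => (hU01 n ω).2.trans ?_
    have : (0:ℝ) < 1/2^n := by positivity
    linarith
  have hUright : ∀ n ω, U ω ≤ Useq n ω + 1/2^n := by
    intro n ω
    refine ciSup_le fun m => ?_
    rcases le_total m n with h | h
    · exact (hUmono ω h).trans (le_add_of_nonneg_right (by positivity))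
    · obtain ⟨d, rfl⟩ := Nat.exists_eq_add_of_le h
      have key : ∀ d : ℕ, Useq (n+d) ω ≤ Useq n ω + 1/2^n - 1/2^(n+d) := by
        intro d
        induction d with
        | zero => simp
        | succ d ih =>
          have h1 := hUstep (n+d) ω
          have hpow : (1:ℝ)/2^(n+d) = 2/2^(n+d+1) := by
            rw [pow_succ]
            field_simp
          have : Useq ((n+d)+1) ω ≤ Useq (n+d) ω + 1/2^((n+d)+1) := h1
          calc Useq (n+(d+1)) ω = Useq ((n+d)+1) ω := by rw [show n+(d+1) = (n+d)+1 by ring]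
          _ ≤ Useq (n+d) ω + 1/2^((n+d)+1) := h1
          _ ≤ (Useq n ω + 1/2^n - 1/2^(n+d)) + 1/2^((n+d)+1) := by linarith
          _ = Useq n ω + 1/2^n - 1/2^(n+(d+1)) := by
              rw [show n+(d+1) = (n+d)+1 by ring]
              rw [hpow]
              ring
      refine (key d).trans ?_
      have : (0:ℝ) < 1/2^(n+d) := by positivity
      linarith
  -- the distribution function of U
  have hset : ∀ x : ℝ, 0 ≤ x → x < 1 → μ {ω | U ω ≤ x} = ENNReal.ofReal x := by
    intro x hx0 hx1
    have hfl : ∀ n : ℕ, (Nat.floor ((2:ℝ)^n * x) + 1 : ℕ) ≤ 2^n := by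
      intro n
      have h1 : Nat.floor ((2:ℝ)^n * x) < 2^n := by
        rw [Nat.floor_lt (by positivity)]
        push_cast
        nlinarith [pow_pos (show (0:ℝ) < 2 by norm_num) n]
      omega
    have hsets : ∀ n : ℕ, {ω | Useq n ω ≤ x} = A n (Nat.floor ((2:ℝ)^n * x) + 1) := by
      intro n
      ext ω
      simp only [Set.mem_setOf_eq, hUseq]
      rw [div_le_iff₀ (by positivity), mul_comm x]
      rw [← Nat.le_floor_iff (by positivity)]
      exact hchar n _ ω (hfl n)
    have hinter : {ω | U ω ≤ x} = ⋂ n, {ω | Useq n ω ≤ x} := by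
      ext ω
      simp only [Set.mem_setOf_eq, Set.mem_iInter]
      constructor
      · intro h n
        exact (hUleft n ω).trans h
      · intro h
        exact ciSup_le h
    have hanti : Antitone (fun n => {ω | Useq n ω ≤ x}) := by
      refine antitone_nat_of_succ_le fun n => ?_
      intro ω hω
      exact le_trans (hUmono ω (Nat.le_succ n)) hω
    rw [hinter, hanti.measure_iInter
      (fun n => by rw [hsets n]; exact ((hAP n).1 _).nullMeasurableSet)
      ⟨0, measure_ne_top μ _⟩]
    have hval : ∀ n : ℕ, μ {ω | Useq n ω ≤ x} =
        ENNReal.ofReal (((Nat.floor ((2:ℝ)^n * x) : ℝ) + 1) / 2^n) := by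
      intro n
      rw [hsets n, (hAP n).2.2.2.2 _ (hfl n)]
      congr 1
      push_cast
      ring_nf
    refine le_antisymm ?_ ?_
    · refine ENNReal.le_of_forall_pos_le_add fun ε hε _ => ?_
      obtain ⟨n, hn⟩ : ∃ n : ℕ, (1:ℝ)/2^n < (ε:ℝ) := by
        obtain ⟨n, hn⟩ := exists_pow_lt_of_lt_one (by exact_mod_cast hε) (by norm_num : (1:ℝ)/2 < 1)
        refine ⟨n, ?_⟩
        calc (1:ℝ)/2^n = (1/2)^n := by rw [div_pow, one_pow]
        _ < ε := hn
      refine (iInf_le _ n).trans ?_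
      rw [hval n]
      have hle : ((Nat.floor ((2:ℝ)^n * x) : ℝ) + 1) / 2^n ≤ x + 1/2^n := by
        have h1 : (Nat.floor ((2:ℝ)^n * x) : ℝ) ≤ 2^n * x := Nat.floor_le (by positivity)
        rw [div_le_iff₀ (by positivity)]
        have hp : (0:ℝ) < 2^n := by positivity
        calc (Nat.floor ((2:ℝ)^n * x) : ℝ) + 1 ≤ 2^n * x + 1 := by linarith
        _ = (x + 1/2^n) * 2^n := by field_simp
      calc ENNReal.ofReal (((Nat.floor ((2:ℝ)^n * x) : ℝ) + 1) / 2^n)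
          ≤ ENNReal.ofReal (x + 1/2^n) := ENNReal.ofReal_le_ofReal hle
      _ = ENNReal.ofReal x + ENNReal.ofReal (1/2^n) :=
          ENNReal.ofReal_add hx0 (by positivity)
      _ ≤ ENNReal.ofReal x + ε := by
          refine add_le_add_right ?_ _
          rw [← ENNReal.ofReal_coe_nnreal]
          exact ENNReal.ofReal_le_ofReal hn.le
    · refine le_iInf fun n => ?_
      rw [hval n]
      refine ENNReal.ofReal_le_ofReal ?_
      rw [le_div_iff₀ (by positivity)]
      have := Nat.lt_floor_add_one ((2:ℝ)^n * x)
      nlinarith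
  -- conclude
  refine ⟨U, hUmeasfin, fun ω => ⟨hUnonneg ω, hUle1 ω⟩, ?_⟩
  haveI : IsProbabilityMeasure (Measure.map U μ) :=
    Measure.isProbabilityMeasure_map hUmeasfin.aemeasurable
  refine Measure.ext_of_Iic _ _ (fun x => ?_)
  rw [Measure.map_apply hUmeasfin measurableSet_Iic]
  rw [unif, Measure.restrict_apply measurableSet_Iic]
  have hpre : U ⁻¹' Set.Iic x = {ω | U ω ≤ x} := rfl
  rw [hpre]
  rcases lt_or_ge x 0 with hx | hx
  · have h1 : {ω | U ω ≤ x} = ∅ := by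
      ext ω
      simp only [Set.mem_setOf_eq, Set.mem_empty_iff_false, iff_false, not_le]
      exact lt_of_lt_of_le hx (hUnonneg ω)
    have h2 : Set.Iic x ∩ Set.Icc (0:ℝ) 1 = ∅ := by
      ext t
      simp only [Set.mem_inter_iff, Set.mem_Iic, Set.mem_Icc, Set.mem_empty_iff_false, iff_false]
      rintro ⟨h3, h4, h5⟩
      linarith
    rw [h1, h2]
    simp
  · rcases lt_or_ge x 1 with hx1 | hx1
    · rw [hset x hx hx1]
      have h2 : Set.Iic x ∩ Set.Icc (0:ℝ) 1 = Set.Icc 0 x := by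
        ext t
        simp only [Set.mem_inter_iff, Set.mem_Iic, Set.mem_Icc]
        constructor
        · rintro ⟨h3, h4, h5⟩; exact ⟨h4, h3⟩
        · rintro ⟨h3, h4⟩; exact ⟨h4, h3, by linarith⟩
      rw [h2, Real.volume_Icc]
      congr 1
      ring
    · have h1 : {ω | U ω ≤ x} = Set.univ := by
        ext ω
        simp only [Set.mem_setOf_eq, Set.mem_univ, iff_true]
        exact (hUle1 ω).trans hx1
      have h2 : Set.Iic x ∩ Set.Icc (0:ℝ) 1 = Set.Icc 0 1 := by
        ext t
        simp only [Set.mem_inter_iff, Set.mem_Iic, Set.mem_Icc]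
        constructor
        · rintro ⟨h3, h4, h5⟩; exact ⟨h4, h5⟩
        · rintro ⟨h3, h4⟩; exact ⟨by linarith, h3, h4⟩
      rw [h1, h2, measure_univ, Real.volume_Icc]
      norm_num


/-- `ν` is supported in `[a,b]`. -/
def Supp (ν : Measure ℝ) (a b : ℝ) : Prop := ν (Set.Icc a b)ᶜ = 0

/-- Truncated left-quantile function. -/
noncomputable def myQ (a b : ℝ) (ν : Measure ℝ) (t : ℝ) : ℝ :=
  sInf ({x | x ∈ Set.Icc a b ∧ t ≤ cdf ν x} ∪ {b})

variable {ν : Measure ℝ} {a b : ℝ}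

lemma myQ_set_nonempty (t : ℝ) : ({x | x ∈ Set.Icc a b ∧ t ≤ cdf ν x} ∪ {b} : Set ℝ).Nonempty :=
  ⟨b, Or.inr rfl⟩

lemma myQ_set_bddBelow (hab : a ≤ b) (t : ℝ) :
    BddBelow ({x | x ∈ Set.Icc a b ∧ t ≤ cdf ν x} ∪ {b} : Set ℝ) := by
  refine ⟨a, ?_⟩
  rintro x (⟨⟨hx, _⟩, _⟩ | rfl)
  · exact hx
  · exact hab

lemma myQ_mem (hab : a ≤ b) (t : ℝ) : myQ a b ν t ∈ Set.Icc a b := by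
  constructor
  · refine le_csInf (myQ_set_nonempty t) ?_
    rintro x (⟨⟨hx, _⟩, _⟩ | rfl)
    · exact hx
    · exact hab
  · exact csInf_le (myQ_set_bddBelow hab t) (Or.inr rfl)

lemma myQ_mono (hab : a ≤ b) : Monotone (myQ a b ν) := by
  intro s t hst
  refine csInf_le_csInf (myQ_set_bddBelow hab s) (myQ_set_nonempty t) ?_
  rintro x (⟨hx, hcdf⟩ | rfl)
  · exact Or.inl ⟨hx, hst.trans hcdf⟩
  · exact Or.inr rfl

lemma cdf_eq_zero_of_lt [IsProbabilityMeasure ν] (hsupp : Supp ν a b) (hx : x < a) :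
    cdf ν x = 0 := by
  rw [cdf_eq_real, measureReal_def]
  have : ν (Set.Iic x) = 0 := by
    refine measure_mono_null ?_ hsupp
    intro t ht
    simp only [Set.mem_Iic] at ht
    simp only [Set.mem_compl_iff, Set.mem_Icc, not_and, not_le]
    intro h
    linarith
  rw [this]
  simp

lemma cdf_eq_one_of_le [IsProbabilityMeasure ν] (hsupp : Supp ν a b) (hx : b ≤ x) :
    cdf ν x = 1 := by
  rw [cdf_eq_real, measureReal_def]
  have h1 : ν (Set.Iic x) = 1 := by
    refine le_antisymm prob_le_one ?_
    have : (Set.Iic x)ᶜ ⊆ (Set.Icc a b)ᶜ := by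
      intro t ht
      simp only [Set.mem_compl_iff, Set.mem_Iic, not_le] at ht
      simp only [Set.mem_compl_iff, Set.mem_Icc, not_and, not_le]
      intro h
      linarith
    have h2 : ν (Set.Iic x)ᶜ = 0 := measure_mono_null this hsupp
    have h3 := measure_add_measure_compl (μ := ν) (measurableSet_Iic (a := x))
    rw [h2, add_zero] at h3
    rw [h3, measure_univ]
  rw [h1]
  simp

lemma myQ_le_iff [IsProbabilityMeasure ν] (hab : a ≤ b) (hsupp : Supp ν a b)
    {t : ℝ} (ht : 0 < t) (ht1 : t ≤ 1) (x : ℝ) :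
    myQ a b ν t ≤ x ↔ t ≤ cdf ν x := by
  constructor
  · intro h
    have hy : ∀ y, x < y → t ≤ cdf ν y := by
      intro y hy
      have : sInf ({x | x ∈ Set.Icc a b ∧ t ≤ cdf ν x} ∪ {b} : Set ℝ) < y :=
        lt_of_le_of_lt h hy
      rw [csInf_lt_iff (myQ_set_bddBelow hab t) (myQ_set_nonempty t)] at this
      obtain ⟨z, hz, hzy⟩ := this
      rcases hz with ⟨_, hcdf⟩ | rfl
      · exact hcdf.trans (monotone_cdf ν hzy.le)
      · rw [cdf_eq_one_of_le hsupp hzy.le]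
        exact ht1
    have hrc : Tendsto (cdf ν) (𝓝[>] x) (𝓝 (cdf ν x)) :=
      ((cdf ν).right_continuous x).tendsto.mono_left
        (nhdsWithin_mono x Set.Ioi_subset_Ici_self)
    refine ge_of_tendsto hrc ?_
    filter_upwards [self_mem_nhdsWithin] with y hy'
    exact hy y hy'
  · intro h
    rcases lt_or_ge x a with hx | hx
    · exact absurd (h.trans_eq (cdf_eq_zero_of_lt hsupp hx)) (by linarith)
    · rcases le_or_gt x b with hxb | hxb
      · exact csInf_le (myQ_set_bddBelow hab t) (Or.inl ⟨⟨hx, hxb⟩, h⟩)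
      · exact ((myQ_mem hab t).2).trans hxb.le

lemma measurable_myQ (hab : a ≤ b) : Measurable (myQ a b ν) := (myQ_mono hab).measurable

/-- Inverse transform sampling. -/
lemma map_myQ [IsProbabilityMeasure ν] (hab : a ≤ b) (hsupp : Supp ν a b) :
    Measure.map (myQ a b ν) unif = ν := by
  haveI : IsProbabilityMeasure (Measure.map (myQ a b ν) unif) :=
    Measure.isProbabilityMeasure_map (measurable_myQ hab).aemeasurable
  refine Measure.ext_of_Iic _ _ (fun x => ?_)
  rw [Measure.map_apply (measurable_myQ hab) measurableSet_Iic]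
  rw [unif, Measure.restrict_apply ((measurable_myQ hab) measurableSet_Iic)]
  set E : Set ℝ := myQ a b ν ⁻¹' Set.Iic x with hE
  have hcdf1 : cdf ν x ≤ 1 := cdf_le_one ν x
  have hcdf0 : 0 ≤ cdf ν x := cdf_nonneg ν x
  have key : E ∩ Set.Ioc 0 1 = Set.Ioc 0 (cdf ν x) := by
    ext t
    simp only [hE, Set.mem_inter_iff, Set.mem_preimage, Set.mem_Iic, Set.mem_Ioc]
    constructor
    · rintro ⟨hQ, ht0, ht1⟩
      exact ⟨ht0, (myQ_le_iff hab hsupp ht0 ht1 x).mp hQ⟩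
    · rintro ⟨ht0, htc⟩
      exact ⟨(myQ_le_iff hab hsupp ht0 (htc.trans hcdf1) x).mpr htc, ht0, htc.trans hcdf1⟩
  have h2 : volume (E ∩ Set.Icc 0 1) = volume (E ∩ Set.Ioc 0 1) := by
    apply le_antisymm
    · have hsub : E ∩ Set.Icc 0 1 ⊆ (E ∩ Set.Ioc 0 1) ∪ {0} := by
        rintro t ⟨htE, ht0, ht1⟩
        rcases eq_or_lt_of_le ht0 with h | h
        · exact Or.inr (by simp [← h])
        · exact Or.inl ⟨htE, h, ht1⟩
      refine (measure_mono hsub).trans ?_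
      refine (measure_union_le _ _).trans ?_
      simp
    · exact measure_mono (Set.inter_subset_inter_right E Set.Ioc_subset_Icc_self)
  rw [h2, key, Real.volume_Ioc, sub_zero, ofReal_cdf]


section Main
variable {Ω : Type*} [MeasurableSpace Ω] {μ : Measure Ω}

lemma map_one_sub_unif : Measure.map (fun t : ℝ => 1 - t) unif = unif := by
  have hm : MeasurePreserving (fun t : ℝ => 1 - t) volume volume := by
    have h1 : (fun t : ℝ => 1 - t) = (fun t : ℝ => 1 + t) ∘ (fun t : ℝ => -t) := by
      funext t; simp [sub_eq_add_neg]
    rw [h1]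
    exact (measurePreserving_add_left volume 1).comp (Measure.measurePreserving_neg volume)
  have hpre : (fun t : ℝ => 1 - t) ⁻¹' (Set.Icc 0 1) = Set.Icc (0:ℝ) 1 := by
    ext t
    simp only [Set.mem_preimage, Set.mem_Icc]
    constructor <;> (rintro ⟨h1, h2⟩; constructor <;> linarith)
  calc Measure.map (fun t : ℝ => 1 - t) unif
      = Measure.map (fun t : ℝ => 1 - t) (volume.restrict ((fun t : ℝ => 1 - t) ⁻¹' (Set.Icc 0 1))) := by
        rw [unif, hpre]
  _ = (Measure.map (fun t : ℝ => 1 - t) volume).restrict (Set.Icc 0 1) :=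
      (Measure.restrict_map hm.measurable measurableSet_Icc).symm
  _ = unif := by rw [hm.map_eq, unif]

/-- equal laws give equal integrals -/
lemma integral_eq_of_map_eq {f g : Ω → ℝ} (hf : AEMeasurable f μ) (hg : AEMeasurable g μ)
    (h : Measure.map f μ = Measure.map g μ) : ∫ ω, f ω ∂μ = ∫ ω, g ω ∂μ := by
  have h1 : ∫ ω, f ω ∂μ = ∫ x, x ∂(Measure.map f μ) :=
    (integral_map hf aestronglyMeasurable_id).symm
  have h2 : ∫ ω, g ω ∂μ = ∫ x, x ∂(Measure.map g μ) :=
    (integral_map hg aestronglyMeasurable_id).symm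
  rw [h1, h2, h]

lemma prod_fst_null [IsProbabilityMeasure μ] {s : Set Ω} (hs : μ s = 0) :
    (μ.prod μ) {p : Ω × Ω | p.1 ∈ s} = 0 := by
  obtain ⟨t, hst, htm, htμ⟩ := exists_measurable_superset_of_null hs
  refine measure_mono_null (t := t ×ˢ Set.univ) (fun p hp => Set.mem_prod.mpr ⟨hst hp, Set.mem_univ p.2⟩) ?_
  rw [Measure.prod_prod, htμ, zero_mul]

lemma prod_snd_null [IsProbabilityMeasure μ] {s : Set Ω} (hs : μ s = 0) :
    (μ.prod μ) {p : Ω × Ω | p.2 ∈ s} = 0 := by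
  obtain ⟨t, hst, htm, htμ⟩ := exists_measurable_superset_of_null hs
  refine measure_mono_null (t := Set.univ ×ˢ t) (fun p hp => Set.mem_prod.mpr ⟨Set.mem_univ p.1, hst hp⟩) ?_
  rw [Measure.prod_prod, htμ, mul_zero]

lemma ae_prod_fst [IsProbabilityMeasure μ] {f g : Ω → ℝ} (h : f =ᵐ[μ] g) :
    ∀ᵐ p ∂(μ.prod μ), f p.1 = g p.1 := by
  have h0 : μ {ω | ¬ f ω = g ω} = 0 := h
  have := prod_fst_null (μ := μ) h0
  exact this

lemma ae_prod_snd [IsProbabilityMeasure μ] {f g : Ω → ℝ} (h : f =ᵐ[μ] g) :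
    ∀ᵐ p ∂(μ.prod μ), f p.2 = g p.2 := by
  have h0 : μ {ω | ¬ f ω = g ω} = 0 := h
  have := prod_snd_null (μ := μ) h0
  exact this

lemma antimono_congr [IsProbabilityMeasure μ] {f f' g g' : Ω → ℝ}
    (hf : f =ᵐ[μ] f') (hg : g =ᵐ[μ] g') (h : Antimonotonic μ f g) : Antimonotonic μ f' g' := by
  filter_upwards [h, ae_prod_fst hf, ae_prod_snd hf, ae_prod_fst hg, ae_prod_snd hg]
    with p h1 h2 h3 h4 h5
  rw [← h2, ← h3, ← h4, ← h5]
  exact h1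

lemma sameDist_congr {f f' g g' : Ω → ℝ}
    (hf : f =ᵐ[μ] f') (hg : g =ᵐ[μ] g') (h : SameDist μ f g) : SameDist μ f' g' := by
  unfold SameDist at *
  rw [← Measure.map_congr hf, ← Measure.map_congr hg]
  exact h

lemma exchangeable_congr {f f' g g' : Ω → ℝ}
    (hf : f =ᵐ[μ] f') (hg : g =ᵐ[μ] g') (h : Exchangeable μ f g) : Exchangeable μ f' g' := by
  unfold Exchangeable at *
  have h1 : (fun ω => (f ω, g ω)) =ᵐ[μ] (fun ω => (f' ω, g' ω)) := by
    filter_upwards [hf, hg] with ω h1 h2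
    rw [h1, h2]
  have h2 : (fun ω => (g ω, f ω)) =ᵐ[μ] (fun ω => (g' ω, f' ω)) := by
    filter_upwards [hf, hg] with ω h1 h2
    rw [h1, h2]
  rw [← Measure.map_congr h1, ← Measure.map_congr h2]
  exact h

lemma map_comp_eq {g : ℝ → ℝ} (hg : Measurable g) {V : Ω → ℝ} (hV : Measurable V) :
    Measure.map (fun ω => g (V ω)) μ = Measure.map g (Measure.map V μ) :=
  (Measure.map_map hg hV).symm

/-- one step of the averaging scheme -/
lemma step_all (ν : Measure ℝ) [IsProbabilityMeasure ν] {a b : ℝ} (hab : a ≤ b)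
    (hsupp : Supp ν a b) :
    IsProbabilityMeasure (Measure.map (fun t => (myQ a b ν t + myQ a b ν (1 - t)) / 2) unif) ∧
      Supp (Measure.map (fun t => (myQ a b ν t + myQ a b ν (1 - t)) / 2) unif)
        ((a + myQ a b ν 2⁻¹) / 2) ((myQ a b ν 2⁻¹ + b) / 2) ∧
      a ≤ (a + myQ a b ν 2⁻¹) / 2 ∧ (myQ a b ν 2⁻¹ + b) / 2 ≤ b ∧
      (myQ a b ν 2⁻¹ + b) / 2 - (a + myQ a b ν 2⁻¹) / 2 = (b - a) / 2 := by
  have hc := myQ_mem (ν := ν) hab 2⁻¹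
  set c := myQ a b ν 2⁻¹ with hcdef
  have hgm : Measurable (fun t => (myQ a b ν t + myQ a b ν (1 - t)) / 2) :=
    ((measurable_myQ hab).add
      ((measurable_myQ hab).comp (measurable_const.sub measurable_id))).div_const 2
  refine ⟨Measure.isProbabilityMeasure_map hgm.aemeasurable, ?_, by linarith [hc.1, hc.2],
    by linarith [hc.1, hc.2], by ring⟩
  show Measure.map _ unif (Set.Icc ((a + c)/2) ((c + b)/2))ᶜ = 0
  rw [Measure.map_apply hgm measurableSet_Icc.compl]
  refine measure_mono_null (t := (Set.Ioo (0:ℝ) 1)ᶜ) ?_ ?_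
  · intro t ht
    simp only [Set.mem_preimage, Set.mem_compl_iff, Set.mem_Icc, not_and, not_le] at ht
    simp only [Set.mem_compl_iff, Set.mem_Ioo, not_and, not_lt]
    intro ht0
    by_contra ht1
    push_neg at ht1
    have h1 : myQ a b ν t ∈ Set.Icc a b := myQ_mem hab t
    have h2 : myQ a b ν (1 - t) ∈ Set.Icc a b := myQ_mem hab (1 - t)
    rcases le_total t 2⁻¹ with h | h
    · have hq1 : myQ a b ν t ≤ c := myQ_mono hab h
      have hq2 : c ≤ myQ a b ν (1 - t) := myQ_mono hab (by linarith)
      have := ht (by linarith [h1.1, hq2])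
      linarith [h1.1, h2.2]
    · have hq1 : c ≤ myQ a b ν t := myQ_mono hab h
      have hq2 : myQ a b ν (1 - t) ≤ c := myQ_mono hab (by linarith)
      have := ht (by linarith [h2.1, hq1])
      linarith [h1.2, h2.1]
  · show unif (Set.Ioo (0:ℝ) 1)ᶜ = 0
    rw [unif, Measure.restrict_apply measurableSet_Ioo.compl]
    refine measure_mono_null (t := ({0, 1} : Set ℝ)) ?_
      (Set.Finite.measure_zero ((Set.finite_singleton (1:ℝ)).insert 0) _)
    rintro t ⟨ht1, ht2, ht3⟩
    simp only [Set.mem_compl_iff, Set.mem_Ioo, not_and, not_lt] at ht1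
    simp only [Set.mem_insert_iff, Set.mem_singleton_iff]
    rcases eq_or_lt_of_le ht2 with h | h
    · exact Or.inl h.symm
    · exact Or.inr (le_antisymm ht3 (ht1 h))

/-- The key engine: diversification neutrality on a class containing all
antimonotonic-ID-exchangeable pairs implies risk neutrality. -/
theorem riskNeutral_of_divNeutral [IsProbabilityMeasure μ]
    (hatomless : Atomless μ) (R : Lp ℝ ∞ μ → Lp ℝ ∞ μ → Prop)
    (htrans : IsTrans' μ R) (hlaw : LawInvariant μ R) (hcont : NormContinuous μ R)
    (P : Lp ℝ ∞ μ → Lp ℝ ∞ μ → Prop)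
    (hP : ∀ X Y : Lp ℝ ∞ μ, Antimonotonic μ (X : Ω → ℝ) (Y : Ω → ℝ) →
      SameDist μ (X : Ω → ℝ) (Y : Ω → ℝ) → Exchangeable μ (X : Ω → ℝ) (Y : Ω → ℝ) → P X Y)
    (hdiv : DiversificationNeutralOn μ R P) : RiskNeutral μ R := by
  obtain ⟨U, hUm, hU01, hUmap⟩ := exists_uniform hatomless
  intro X
  set f : Ω → ℝ := (X : Ω → ℝ) with hfdef
  have hfm : AEStronglyMeasurable f μ := Lp.aestronglyMeasurable X
  set C : ℝ := ‖X‖ with hCdef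
  have hC0 : 0 ≤ C := norm_nonneg X
  have hbdd : ∀ᵐ ω ∂μ, ‖f ω‖ ≤ C := by
    have h1 : ∀ᵐ ω ∂μ, (‖f ω‖₊ : ℝ≥0∞) ≤ eLpNormEssSup f μ := ae_le_eLpNormEssSup
    have h2 : eLpNormEssSup f μ ≠ ⊤ := by
      have h2' : eLpNorm f ⊤ μ ≠ ⊤ := (Lp.eLpNorm_lt_top X).ne
      rwa [eLpNorm_exponent_top] at h2'
    filter_upwards [h1] with ω hω
    have h3 : ‖f ω‖ = ((‖f ω‖₊ : ℝ≥0∞)).toReal := by simp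
    rw [h3, hCdef, Lp.norm_def, eLpNorm_exponent_top]
    exact ENNReal.toReal_mono h2 hω
  set ν₀ : Measure ℝ := Measure.map f μ with hν₀
  haveI : IsProbabilityMeasure ν₀ := Measure.isProbabilityMeasure_map hfm.aemeasurable
  have hsupp₀ : Supp ν₀ (-C) C := by
    show ν₀ (Set.Icc (-C) C)ᶜ = 0
    rw [hν₀, Measure.map_apply_of_aemeasurable hfm.aemeasurable measurableSet_Icc.compl]
    have : ∀ᵐ ω ∂μ, f ω ∈ Set.Icc (-C) C := by
      filter_upwards [hbdd] with ω hω
      rw [Real.norm_eq_abs, abs_le] at hω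
      exact hω
    exact ae_iff.mp this
  -- the iteration
  set T : Measure ℝ × ℝ × ℝ → Measure ℝ × ℝ × ℝ := fun p =>
    (Measure.map (fun t => (myQ p.2.1 p.2.2 p.1 t + myQ p.2.1 p.2.2 p.1 (1 - t)) / 2) unif,
     (p.2.1 + myQ p.2.1 p.2.2 p.1 2⁻¹) / 2, (myQ p.2.1 p.2.2 p.1 2⁻¹ + p.2.2) / 2) with hT
  set it : ℕ → Measure ℝ × ℝ × ℝ := fun n => T^[n] (ν₀, -C, C) with hit
  have hit0 : it 0 = (ν₀, -C, C) := rfl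
  have hitS : ∀ n, it (n+1) = T (it n) := fun n => Function.iterate_succ_apply' T n _
  have hinv : ∀ n, IsProbabilityMeasure (it n).1 ∧ Supp (it n).1 (it n).2.1 (it n).2.2 ∧
      (-C ≤ (it n).2.1 ∧ (it n).2.1 ≤ (it n).2.2 ∧ (it n).2.2 ≤ C) ∧
      (it n).2.2 - (it n).2.1 = 2 * C * (1/2)^n := by
    intro n
    induction n with
    | zero =>
      rw [hit0]
      refine ⟨?_, ?_, ⟨?_, ?_, ?_⟩, ?_⟩
      · show IsProbabilityMeasure ν₀
        infer_instance
      · exact hsupp₀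
      · show -C ≤ -C
        exact le_rfl
      · show -C ≤ C
        linarith
      · show C ≤ C
        exact le_rfl
      · show C - -C = 2 * C * (1/2)^0
        norm_num
        ring
    | succ n ih =>
      obtain ⟨hprob, hsupp, ⟨hca, hab, hbc⟩, hw⟩ := ih
      haveI := hprob
      obtain ⟨h1, h2, h3, h4, h5⟩ := step_all (it n).1 hab hsupp
      rw [hitS n]
      refine ⟨h1, h2, ⟨le_trans hca h3, ?_, le_trans h4 hbc⟩, ?_⟩
      · show ((it n).2.1 + myQ (it n).2.1 (it n).2.2 (it n).1 2⁻¹) / 2 ≤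
          (myQ (it n).2.1 (it n).2.2 (it n).1 2⁻¹ + (it n).2.2) / 2
        linarith [h3, h4]
      · show (myQ (it n).2.1 (it n).2.2 (it n).1 2⁻¹ + (it n).2.2) / 2 -
          ((it n).2.1 + myQ (it n).2.1 (it n).2.2 (it n).1 2⁻¹) / 2 = 2 * C * (1/2)^(n+1)
        rw [h5, hw]
        ring
  -- the random variables
  set Z : ℕ → Ω → ℝ := fun n ω => myQ (it n).2.1 (it n).2.2 (it n).1 (U ω) with hZ
  set Z' : ℕ → Ω → ℝ := fun n ω => myQ (it n).2.1 (it n).2.2 (it n).1 (1 - U ω) with hZ'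
  have habn : ∀ n, (it n).2.1 ≤ (it n).2.2 := fun n => (hinv n).2.2.1.2.1
  have hZmeas : ∀ n, Measurable (Z n) := fun n => (measurable_myQ (habn n)).comp hUm
  have hZ'meas : ∀ n, Measurable (Z' n) := fun n =>
    (measurable_myQ (habn n)).comp (measurable_const.sub hUm)
  have hZmap : ∀ n, Measure.map (Z n) μ = (it n).1 := by
    intro n
    haveI := (hinv n).1
    rw [hZ, map_comp_eq (measurable_myQ (habn n)) hUm, hUmap,
      map_myQ (habn n) (hinv n).2.1]
  have hone_sub : Measure.map (fun ω => 1 - U ω) μ = unif := by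
    rw [map_comp_eq (g := fun t : ℝ => 1 - t) (measurable_const.sub measurable_id) hUm, hUmap, map_one_sub_unif]
  have hZ'map : ∀ n, Measure.map (Z' n) μ = (it n).1 := by
    intro n
    haveI := (hinv n).1
    rw [hZ', map_comp_eq (V := fun ω => 1 - U ω) (measurable_myQ (habn n)) (measurable_const.sub hUm), hone_sub,
      map_myQ (habn n) (hinv n).2.1]
  have hZbound : ∀ n ω, Z n ω ∈ Set.Icc (-C) C := by
    intro n ω
    have h1 := myQ_mem (ν := (it n).1) (habn n) (U ω)
    obtain ⟨hca, _, hbc⟩ := (hinv n).2.2.1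
    exact ⟨le_trans hca h1.1, le_trans h1.2 hbc⟩
  have hZ'bound : ∀ n ω, Z' n ω ∈ Set.Icc (-C) C := by
    intro n ω
    have h1 := myQ_mem (ν := (it n).1) (habn n) (1 - U ω)
    obtain ⟨hca, _, hbc⟩ := (hinv n).2.2.1
    exact ⟨le_trans hca h1.1, le_trans h1.2 hbc⟩
  have hZmem : ∀ n, MemLp (Z n) ∞ μ := fun n =>
    memLp_top_of_bound (hZmeas n).aestronglyMeasurable C (ae_of_all _ fun ω => by
      rw [Real.norm_eq_abs, abs_le]
      have := hZbound n ω
      exact ⟨this.1, this.2⟩)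
  have hZ'mem : ∀ n, MemLp (Z' n) ∞ μ := fun n =>
    memLp_top_of_bound (hZ'meas n).aestronglyMeasurable C (ae_of_all _ fun ω => by
      rw [Real.norm_eq_abs, abs_le]
      have := hZ'bound n ω
      exact ⟨this.1, this.2⟩)
  set ZLp : ℕ → Lp ℝ ∞ μ := fun n => (hZmem n).toLp (Z n) with hZLp
  set Z'Lp : ℕ → Lp ℝ ∞ μ := fun n => (hZ'mem n).toLp (Z' n) with hZ'Lp
  have hZcoe : ∀ n, ((ZLp n : Lp ℝ ∞ μ) : Ω → ℝ) =ᵐ[μ] Z n := fun n => (hZmem n).coeFn_toLp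
  have hZ'coe : ∀ n, ((Z'Lp n : Lp ℝ ∞ μ) : Ω → ℝ) =ᵐ[μ] Z' n := fun n => (hZ'mem n).coeFn_toLp
  set EX : ℝ := ∫ ω, f ω ∂μ with hEX
  -- integrals agree
  have hYmap : ∀ n, Measure.map (fun ω => (Z n ω + Z' n ω)/2) μ = (it (n+1)).1 := by
    intro n
    have hgm : Measurable (fun t => (myQ (it n).2.1 (it n).2.2 (it n).1 t +
        myQ (it n).2.1 (it n).2.2 (it n).1 (1 - t)) / 2) :=
      ((measurable_myQ (habn n)).add
        ((measurable_myQ (habn n)).comp (measurable_const.sub measurable_id))).div_const 2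
    have : (fun ω => (Z n ω + Z' n ω)/2) = fun ω => (myQ (it n).2.1 (it n).2.2 (it n).1 (U ω) +
        myQ (it n).2.1 (it n).2.2 (it n).1 (1 - U ω)) / 2 := rfl
    rw [this, map_comp_eq hgm hUm, hUmap, hitS n]
  have hZint : ∀ n, ∫ ω, Z n ω ∂μ = EX := by
    intro n
    induction n with
    | zero =>
      refine integral_eq_of_map_eq (hZmeas 0).aemeasurable hfm.aemeasurable ?_
      rw [hZmap 0, hit0]
    | succ n ih =>
      have h1 : ∫ ω, Z (n+1) ω ∂μ = ∫ ω, (Z n ω + Z' n ω)/2 ∂μ := by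
        refine integral_eq_of_map_eq (hZmeas (n+1)).aemeasurable
          (((hZmeas n).add (hZ'meas n)).div_const 2).aemeasurable ?_
        rw [hZmap (n+1), hYmap n]
      have h2 : ∫ ω, Z' n ω ∂μ = ∫ ω, Z n ω ∂μ := by
        refine integral_eq_of_map_eq (hZ'meas n).aemeasurable (hZmeas n).aemeasurable ?_
        rw [hZmap n, hZ'map n]
      have hint1 : Integrable (Z n) μ := ((hZmem n).integrable le_top)
      have hint2 : Integrable (Z' n) μ := ((hZ'mem n).integrable le_top)
      rw [h1]
      have h3 : ∫ ω, (Z n ω + Z' n ω)/2 ∂μ = ((∫ ω, Z n ω ∂μ) + ∫ ω, Z' n ω ∂μ)/2 := by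
        rw [integral_div, integral_add hint1 hint2]
      rw [h3, h2, ih]
      linarith
  have hEXmem : ∀ n, (it n).2.1 ≤ EX ∧ EX ≤ (it n).2.2 := by
    intro n
    have hint : Integrable (Z n) μ := ((hZmem n).integrable le_top)
    constructor
    · have h := integral_mono (μ := μ) (integrable_const ((it n).2.1)) hint
        (fun ω => (myQ_mem (habn n) (U ω)).1)
      rw [← hZint n]
      simpa using h
    · have h := integral_mono (μ := μ) hint (integrable_const ((it n).2.2))
        (fun ω => (myQ_mem (habn n) (U ω)).2)
      rw [← hZint n]
      simpa using h
  -- the preference chain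
  have hchain : ∀ n, R (ZLp n) X ∧ R X (ZLp n) := by
    intro n
    induction n with
    | zero =>
      have hsd : SameDist μ ((ZLp 0 : Lp ℝ ∞ μ) : Ω → ℝ) ((X : Lp ℝ ∞ μ) : Ω → ℝ) := by
        refine sameDist_congr (hZcoe 0).symm (EventuallyEq.refl _ _) ?_
        show Measure.map (Z 0) μ = Measure.map f μ
        rw [hZmap 0, hit0]
      exact hlaw _ _ hsd
    | succ n ih =>
      have hsdZ : SameDist μ (Z n) (Z' n) := by
        show Measure.map (Z n) μ = Measure.map (Z' n) μ
        rw [hZmap n, hZ'map n]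
      have hsdcoe : SameDist μ ((ZLp n : Lp ℝ ∞ μ) : Ω → ℝ) ((Z'Lp n : Lp ℝ ∞ μ) : Ω → ℝ) :=
        sameDist_congr (hZcoe n).symm (hZ'coe n).symm hsdZ
      have hAM : Antimonotonic μ (Z n) (Z' n) := by
        refine ae_of_all _ fun p => ?_
        rcases le_total (U p.1) (U p.2) with h | h
        · refine mul_nonpos_iff.mpr (Or.inr ⟨?_, ?_⟩)
          · exact sub_nonpos.mpr (myQ_mono (habn n) h)
          · exact sub_nonneg.mpr (myQ_mono (habn n) (by linarith))
        · refine mul_nonpos_iff.mpr (Or.inl ⟨?_, ?_⟩)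
          · exact sub_nonneg.mpr (myQ_mono (habn n) h)
          · exact sub_nonpos.mpr (myQ_mono (habn n) (by linarith))
      have hAMcoe : Antimonotonic μ ((ZLp n : Lp ℝ ∞ μ) : Ω → ℝ) ((Z'Lp n : Lp ℝ ∞ μ) : Ω → ℝ) :=
        antimono_congr (hZcoe n).symm (hZ'coe n).symm hAM
      have hExch : Exchangeable μ (Z n) (Z' n) := by
        show Measure.map (fun ω => (Z n ω, Z' n ω)) μ = Measure.map (fun ω => (Z' n ω, Z n ω)) μ
        have hQm := measurable_myQ (ν := (it n).1) (habn n)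
        have hh : Measurable (fun t : ℝ => (myQ (it n).2.1 (it n).2.2 (it n).1 t,
            myQ (it n).2.1 (it n).2.2 (it n).1 (1 - t))) :=
          hQm.prodMk (hQm.comp (measurable_const.sub measurable_id))
        have h1 : Measure.map (fun ω => (Z n ω, Z' n ω)) μ =
            Measure.map (fun t : ℝ => (myQ (it n).2.1 (it n).2.2 (it n).1 t,
              myQ (it n).2.1 (it n).2.2 (it n).1 (1 - t))) unif := by
          rw [← hUmap, Measure.map_map hh hUm]
          rfl
        have hh' : Measurable (fun t : ℝ => (myQ (it n).2.1 (it n).2.2 (it n).1 (1 - t),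
            myQ (it n).2.1 (it n).2.2 (it n).1 t)) :=
          (hQm.comp (measurable_const.sub measurable_id)).prodMk hQm
        have h2 : Measure.map (fun ω => (Z' n ω, Z n ω)) μ =
            Measure.map (fun t : ℝ => (myQ (it n).2.1 (it n).2.2 (it n).1 (1 - t),
              myQ (it n).2.1 (it n).2.2 (it n).1 t)) unif := by
          rw [← hUmap, Measure.map_map hh' hUm]
          rfl
        have hsub : Measurable (fun t : ℝ => 1 - t) := measurable_const.sub measurable_id
        have h3 : Measure.map (fun t : ℝ => (myQ (it n).2.1 (it n).2.2 (it n).1 t,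
              myQ (it n).2.1 (it n).2.2 (it n).1 (1 - t)))
              (Measure.map (fun t : ℝ => 1 - t) unif) =
            Measure.map (fun t : ℝ => (myQ (it n).2.1 (it n).2.2 (it n).1 (1 - t),
              myQ (it n).2.1 (it n).2.2 (it n).1 t)) unif := by
          rw [Measure.map_map hh hsub]
          congr 1
          funext t
          simp [Function.comp]
        rw [h1, h2, ← h3, map_one_sub_unif]
      have hExcoe : Exchangeable μ ((ZLp n : Lp ℝ ∞ μ) : Ω → ℝ) ((Z'Lp n : Lp ℝ ∞ μ) : Ω → ℝ) :=
        exchangeable_congr (hZcoe n).symm (hZ'coe n).symm hExch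
      have hPn : P (ZLp n) (Z'Lp n) := hP _ _ hAMcoe hsdcoe hExcoe
      have hRpair := hlaw _ _ hsdcoe
      set W : Lp ℝ ∞ μ := (2⁻¹ : ℝ) • ZLp n + (1 - 2⁻¹ : ℝ) • Z'Lp n with hW
      have happ1 : R W (Z'Lp n) :=
        hdiv.1 (ZLp n) (Z'Lp n) hPn hRpair.1 hRpair.2 2⁻¹ (by norm_num) (by norm_num)
      have happ2 : R (ZLp n) W :=
        hdiv.2 (ZLp n) (Z'Lp n) hPn hRpair.1 hRpair.2 2⁻¹ (by norm_num) (by norm_num)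
      have hWcoe : ((W : Lp ℝ ∞ μ) : Ω → ℝ) =ᵐ[μ] fun ω => (Z n ω + Z' n ω)/2 := by
        filter_upwards [Lp.coeFn_add ((2⁻¹ : ℝ) • ZLp n) ((1 - 2⁻¹ : ℝ) • Z'Lp n),
          Lp.coeFn_smul (2⁻¹ : ℝ) (ZLp n), Lp.coeFn_smul (1 - 2⁻¹ : ℝ) (Z'Lp n),
          hZcoe n, hZ'coe n] with ω h1 h2 h3 h4 h5
        rw [hW]
        calc (((2⁻¹ : ℝ) • ZLp n + (1 - 2⁻¹ : ℝ) • Z'Lp n : Lp ℝ ∞ μ) : Ω → ℝ) ω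
            = ((2⁻¹ : ℝ) • ZLp n : Lp ℝ ∞ μ) ω + ((1 - 2⁻¹ : ℝ) • Z'Lp n : Lp ℝ ∞ μ) ω := h1
        _ = (2⁻¹ : ℝ) * (ZLp n : Ω → ℝ) ω + (1 - 2⁻¹ : ℝ) * (Z'Lp n : Ω → ℝ) ω := by
            rw [h2, h3]; rfl
        _ = (Z n ω + Z' n ω)/2 := by rw [h4, h5]; ring
      have hsdW : SameDist μ ((W : Lp ℝ ∞ μ) : Ω → ℝ) ((ZLp (n+1) : Lp ℝ ∞ μ) : Ω → ℝ) := by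
        refine sameDist_congr (f := fun ω => (Z n ω + Z' n ω)/2) (g := Z (n+1))
          hWcoe.symm (hZcoe (n+1)).symm ?_
        show Measure.map _ μ = Measure.map _ μ
        rw [hYmap n, hZmap (n+1)]
      have hlawW := hlaw _ _ hsdW
      constructor
      · exact htrans _ _ _ hlawW.2 (htrans _ _ _ happ1 (htrans _ _ _ hRpair.2 ih.1))
      · exact htrans _ _ _ ih.2 (htrans _ _ _ happ2 hlawW.1)
  -- convergence
  set L : Lp ℝ ∞ μ := constLp μ EX with hL
  have hdist : ∀ n, dist (ZLp n) L ≤ 2 * C * (1/2)^n := by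
    intro n
    have hwn : (0:ℝ) ≤ 2 * C * (1/2)^n := by positivity
    rw [dist_eq_norm, Lp.norm_def]
    refine ENNReal.toReal_le_of_le_ofReal hwn ?_
    have hLcoe : ((L : Lp ℝ ∞ μ) : Ω → ℝ) =ᵐ[μ] fun _ => EX := by
      rw [hL]
      exact (memLp_const (μ := μ) EX).coeFn_toLp
    have hcoe : ((ZLp n - L : Lp ℝ ∞ μ) : Ω → ℝ) =ᵐ[μ] fun ω => Z n ω - EX := by
      filter_upwards [Lp.coeFn_sub (ZLp n) L, hZcoe n, hLcoe] with ω h1 h2 h3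
      rw [h1]
      show (ZLp n : Ω → ℝ) ω - (L : Ω → ℝ) ω = _
      rw [h2, h3]
    rw [eLpNorm_congr_ae hcoe]
    have hb : ∀ᵐ ω ∂μ, ‖Z n ω - EX‖ ≤ 2 * C * (1/2)^n := by
      refine ae_of_all _ fun ω => ?_
      have h1 := myQ_mem (ν := (it n).1) (habn n) (U ω)
      have h2 := hEXmem n
      have h3 := (hinv n).2.2.2
      rw [Real.norm_eq_abs, abs_le]
      constructor
      · have : (it n).2.1 ≤ Z n ω := h1.1
        linarith [h2.2]
      · have : Z n ω ≤ (it n).2.2 := h1.2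
        linarith [h2.1]
    have hbb := eLpNorm_le_of_ae_bound (p := (⊤ : ℝ≥0∞)) hb
    simpa [measure_univ] using hbb
  have htend : Filter.Tendsto ZLp Filter.atTop (nhds L) := by
    rw [tendsto_iff_dist_tendsto_zero]
    refine squeeze_zero (fun n => dist_nonneg) hdist ?_
    have h1 : Filter.Tendsto (fun n : ℕ => (1/2 : ℝ)^n) Filter.atTop (nhds 0) :=
      tendsto_pow_atTop_nhds_zero_of_lt_one (by norm_num) (by norm_num)
    have := h1.const_mul (2 * C)
    simpa using this
  have h1 : L ∈ {Y : Lp ℝ ∞ μ | R Y X} :=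
    (hcont X).1.mem_of_tendsto htend (Filter.Eventually.of_forall fun n => (hchain n).1)
  have h2 : L ∈ {Y : Lp ℝ ∞ μ | R X Y} :=
    (hcont X).2.mem_of_tendsto htend (Filter.Eventually.of_forall fun n => (hchain n).2)
  exact ⟨h1, h2⟩


lemma sameDist_of_exchangeable {X Y : Lp ℝ ∞ μ}
    (h : Exchangeable μ (X : Ω → ℝ) (Y : Ω → ℝ)) : SameDist μ (X : Ω → ℝ) (Y : Ω → ℝ) := by
  have hX := (Lp.aestronglyMeasurable X).aemeasurable
  have hY := (Lp.aestronglyMeasurable Y).aemeasurable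
  have hpair : AEMeasurable (fun ω => ((X : Ω → ℝ) ω, (Y : Ω → ℝ) ω)) μ := hX.prodMk hY
  have hpair' : AEMeasurable (fun ω => ((Y : Ω → ℝ) ω, (X : Ω → ℝ) ω)) μ := hY.prodMk hX
  have h1 : Measure.map (X : Ω → ℝ) μ =
      Measure.map Prod.fst (Measure.map (fun ω => ((X : Ω → ℝ) ω, (Y : Ω → ℝ) ω)) μ) := by
    rw [AEMeasurable.map_map_of_aemeasurable measurable_fst.aemeasurable hpair]
    rfl
  have h2 : Measure.map (Y : Ω → ℝ) μ =
      Measure.map Prod.fst (Measure.map (fun ω => ((Y : Ω → ℝ) ω, (X : Ω → ℝ) ω)) μ) := by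
    rw [AEMeasurable.map_map_of_aemeasurable measurable_fst.aemeasurable hpair']
    rfl
  show Measure.map _ μ = Measure.map _ μ
  rw [h1, h2, h]

lemma divNeutral_ID_of_riskNeutral [IsProbabilityMeasure μ]
    (R : Lp ℝ ∞ μ → Lp ℝ ∞ μ → Prop) (htrans : IsTrans' μ R) (hRN : RiskNeutral μ R) :
    DiversificationNeutralOn μ R (fun X Y => SameDist μ (X : Ω → ℝ) (Y : Ω → ℝ)) := by
  have hint : ∀ (W : Lp ℝ ∞ μ), Integrable (W : Ω → ℝ) μ := fun W =>
    (Lp.memLp W).integrable le_top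
  have hEeq : ∀ (X Y : Lp ℝ ∞ μ) (l : ℝ),
      ∫ ω, ((l • X + (1-l) • Y : Lp ℝ ∞ μ) : Ω → ℝ) ω ∂μ =
        l * (∫ ω, (X : Ω → ℝ) ω ∂μ) + (1-l) * ∫ ω, (Y : Ω → ℝ) ω ∂μ := by
    intro X Y l
    have hcoe : ((l • X + (1-l) • Y : Lp ℝ ∞ μ) : Ω → ℝ) =ᵐ[μ]
        fun ω => l * (X : Ω → ℝ) ω + (1-l) * (Y : Ω → ℝ) ω := by
      filter_upwards [Lp.coeFn_add (l • X) ((1-l) • Y), Lp.coeFn_smul l X,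
        Lp.coeFn_smul (1-l) Y] with ω h1 h2 h3
      calc ((l • X + (1-l) • Y : Lp ℝ ∞ μ) : Ω → ℝ) ω
          = ((l • X : Lp ℝ ∞ μ) : Ω → ℝ) ω + (((1-l) • Y : Lp ℝ ∞ μ) : Ω → ℝ) ω := h1
      _ = l * (X : Ω → ℝ) ω + (1-l) * (Y : Ω → ℝ) ω := by rw [h2, h3]; rfl
    rw [integral_congr_ae hcoe, integral_add ((hint X).const_mul l) ((hint Y).const_mul (1-l)),
      MeasureTheory.integral_const_mul, MeasureTheory.integral_const_mul]
  have hEsame : ∀ (X Y : Lp ℝ ∞ μ), SameDist μ (X : Ω → ℝ) (Y : Ω → ℝ) →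
      ∫ ω, (X : Ω → ℝ) ω ∂μ = ∫ ω, (Y : Ω → ℝ) ω ∂μ := fun X Y h =>
    integral_eq_of_map_eq (Lp.aestronglyMeasurable X).aemeasurable
      (Lp.aestronglyMeasurable Y).aemeasurable h
  constructor
  · intro X Y hsd hXY hYX l hl0 hl1
    have hEW : ∫ ω, ((l • X + (1-l) • Y : Lp ℝ ∞ μ) : Ω → ℝ) ω ∂μ =
        ∫ ω, (Y : Ω → ℝ) ω ∂μ := by
      rw [hEeq X Y l, hEsame X Y hsd]
      ring
    refine htrans _ _ _ (hRN (l • X + (1-l) • Y)).2 ?_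
    rw [hEW]
    exact (hRN Y).1
  · intro X Y hsd hXY hYX l hl0 hl1
    have hEW : ∫ ω, ((l • X + (1-l) • Y : Lp ℝ ∞ μ) : Ω → ℝ) ω ∂μ =
        ∫ ω, (X : Ω → ℝ) ω ∂μ := by
      rw [hEeq X Y l, hEsame X Y hsd]
      ring
    refine htrans _ _ _ (hRN X).2 ?_
    rw [← hEW]
    exact (hRN (l • X + (1-l) • Y)).1

end Main
end RNAux

/-- For a continuous risk preference on an atomless
probability space, risk neutrality, diversification neutrality on ID pairs,
diversification neutrality on exchangeable pairs, and diversification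
neutrality on antimonotonic and ID pairs are all equivalent. -/
theorem riskNeutral_iff_diversificationNeutral_ID_exchangeable_AMID
    {Ω : Type*} [MeasurableSpace Ω] (μ : Measure Ω) [IsProbabilityMeasure μ]
    (hatomless : Atomless μ)
    (R : Lp ℝ ∞ μ → Lp ℝ ∞ μ → Prop)
    (htrans : IsTrans' μ R) (hlaw : LawInvariant μ R) (hcont : NormContinuous μ R) :
    (RiskNeutral μ R ↔
      DiversificationNeutralOn μ R (fun X Y => SameDist μ (X : Ω → ℝ) (Y : Ω → ℝ))) ∧
    (DiversificationNeutralOn μ R (fun X Y => SameDist μ (X : Ω → ℝ) (Y : Ω → ℝ)) ↔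
      DiversificationNeutralOn μ R (fun X Y => Exchangeable μ (X : Ω → ℝ) (Y : Ω → ℝ))) ∧
    (DiversificationNeutralOn μ R (fun X Y => Exchangeable μ (X : Ω → ℝ) (Y : Ω → ℝ)) ↔
      DiversificationNeutralOn μ R (fun X Y =>
        Antimonotonic μ (X : Ω → ℝ) (Y : Ω → ℝ) ∧ SameDist μ (X : Ω → ℝ) (Y : Ω → ℝ))) := by
  have hAB : RiskNeutral μ R →
      DiversificationNeutralOn μ R (fun X Y => SameDist μ (X : Ω → ℝ) (Y : Ω → ℝ)) :=
    fun h => RNAux.divNeutral_ID_of_riskNeutral R htrans h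
  have hBC : DiversificationNeutralOn μ R (fun X Y => SameDist μ (X : Ω → ℝ) (Y : Ω → ℝ)) →
      DiversificationNeutralOn μ R (fun X Y => Exchangeable μ (X : Ω → ℝ) (Y : Ω → ℝ)) := by
    rintro ⟨h1, h2⟩
    exact ⟨fun X Y hP => h1 X Y (RNAux.sameDist_of_exchangeable hP),
      fun X Y hP => h2 X Y (RNAux.sameDist_of_exchangeable hP)⟩
  have hBD : DiversificationNeutralOn μ R (fun X Y => SameDist μ (X : Ω → ℝ) (Y : Ω → ℝ)) →
      DiversificationNeutralOn μ R (fun X Y =>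
        Antimonotonic μ (X : Ω → ℝ) (Y : Ω → ℝ) ∧ SameDist μ (X : Ω → ℝ) (Y : Ω → ℝ)) := by
    rintro ⟨h1, h2⟩
    exact ⟨fun X Y hP => h1 X Y hP.2, fun X Y hP => h2 X Y hP.2⟩
  have hCA : DiversificationNeutralOn μ R (fun X Y => Exchangeable μ (X : Ω → ℝ) (Y : Ω → ℝ)) →
      RiskNeutral μ R := fun h =>
    RNAux.riskNeutral_of_divNeutral hatomless R htrans hlaw hcont _
      (fun X Y _ _ hEx => hEx) h
  have hDA : DiversificationNeutralOn μ R (fun X Y =>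
      Antimonotonic μ (X : Ω → ℝ) (Y : Ω → ℝ) ∧ SameDist μ (X : Ω → ℝ) (Y : Ω → ℝ)) →
      RiskNeutral μ R := fun h =>
    RNAux.riskNeutral_of_divNeutral hatomless R htrans hlaw hcont _
      (fun X Y hAM hID _ => ⟨hAM, hID⟩) h
  exact ⟨⟨hAB, fun hB => hDA (hBD hB)⟩,
    ⟨hBC, fun hC => hAB (hCA hC)⟩,
    ⟨fun hC => hBD (hAB (hCA hC)), fun hD => hBC (hAB (hDA hD))⟩⟩
end

section
/- For every essentially bounded random variable X there exists a sequence (X_n) of random variables, each taking only finitely many values, such that ‖X_n − X‖_∞ → 0 as n → ∞ and X_n ≥_cv X for every n, i.e., E[u(X_n)] ≥ E[u(X)] for every concave function u : ℝ → ℝ. -/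
open MeasureTheory ProbabilityTheory Filter
open scoped ENNReal

section AuxApprox

variable {Ω : Type*} [MeasurableSpace Ω]

/-- The cell of the `n`-th grid partition associated to index `k`. -/
def approxCell (Y : Ω → ℝ) (n : ℕ) (k : ℤ) : Set Ω :=
  {ω | ⌊Y ω * ((n : ℝ) + 1)⌋ = k}

/-- The value (conditional average of `Y`) assigned on the cell of index `k`. -/
noncomputable def cellVal (μ : Measure Ω) (Y : Ω → ℝ) (n : ℕ) (k : ℤ) : ℝ :=
  if μ (approxCell Y n k) = 0 then (k : ℝ) / ((n : ℝ) + 1)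
  else (μ (approxCell Y n k)).toReal⁻¹ * ∫ ω in approxCell Y n k, Y ω ∂μ

lemma measurable_approxCell {Y : Ω → ℝ} (hY : Measurable Y) (n : ℕ) (k : ℤ) :
    MeasurableSet (approxCell Y n k) :=
  (hY.mul_const _).floor (measurableSet_singleton k)

lemma npos (n : ℕ) : (0 : ℝ) < (n : ℝ) + 1 := by positivity

lemma mem_approxCell_bounds {Y : Ω → ℝ} {n : ℕ} {k : ℤ} {ω : Ω}
    (h : ω ∈ approxCell Y n k) :
    Y ω ∈ Set.Icc ((k : ℝ) / ((n : ℝ) + 1)) (((k : ℝ) + 1) / ((n : ℝ) + 1)) := by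
  have hk : ⌊Y ω * ((n : ℝ) + 1)⌋ = k := h
  have h1 : (k : ℝ) ≤ Y ω * ((n : ℝ) + 1) := by
    rw [← hk]; exact Int.floor_le _
  have h2 : Y ω * ((n : ℝ) + 1) ≤ (k : ℝ) + 1 := by
    rw [← hk]; exact (Int.lt_floor_add_one _).le
  constructor
  · rw [div_le_iff₀ (npos n)]; linarith
  · rw [le_div_iff₀ (npos n)]; linarith

lemma cellVal_mem_Icc (μ : Measure Ω) [IsFiniteMeasure μ] {Y : Ω → ℝ}
    (hY : Measurable Y) (hYint : Integrable Y μ) (n : ℕ) (k : ℤ) :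
    cellVal μ Y n k ∈ Set.Icc ((k : ℝ) / ((n : ℝ) + 1)) (((k : ℝ) + 1) / ((n : ℝ) + 1)) := by
  have hstep : (k : ℝ) / ((n : ℝ) + 1) ≤ ((k : ℝ) + 1) / ((n : ℝ) + 1) := by
    have := npos n
    gcongr
    linarith
  by_cases h : μ (approxCell Y n k) = 0
  · simp only [cellVal, h, if_true]
    exact ⟨le_rfl, hstep⟩
  · simp only [cellVal, h, if_false]
    set A := approxCell Y n k with hA
    have hfin : μ A ≠ ⊤ := measure_ne_top μ A
    have hpos : 0 < (μ A).toReal := ENNReal.toReal_pos h hfin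
    set m := (μ A).toReal with hm
    have hIa : m * ((k : ℝ) / ((n : ℝ) + 1)) ≤ ∫ ω in A, Y ω ∂μ := by
      have := setIntegral_mono_on (f := fun _ => (k : ℝ) / ((n : ℝ) + 1)) (g := Y) (μ := μ)
        (integrableOn_const hfin) hYint.integrableOn
        (measurable_approxCell hY n k) (fun ω hω => (mem_approxCell_bounds hω).1)
      simpa [setIntegral_const, smul_eq_mul, measureReal_def] using this
    have hIb : (∫ ω in A, Y ω ∂μ) ≤ m * (((k : ℝ) + 1) / ((n : ℝ) + 1)) := by
      have := setIntegral_mono_on (f := Y) (g := fun _ => ((k : ℝ) + 1) / ((n : ℝ) + 1)) (μ := μ)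
        hYint.integrableOn (integrableOn_const hfin)
        (measurable_approxCell hY n k) (fun ω hω => (mem_approxCell_bounds hω).2)
      simpa [setIntegral_const, smul_eq_mul, measureReal_def] using this
    constructor
    · calc (k : ℝ) / ((n : ℝ) + 1) = m⁻¹ * (m * ((k : ℝ) / ((n : ℝ) + 1))) := by
            field_simp
      _ ≤ m⁻¹ * ∫ ω in A, Y ω ∂μ := by
            exact mul_le_mul_of_nonneg_left hIa (inv_nonneg.2 hpos.le)
    · calc m⁻¹ * ∫ ω in A, Y ω ∂μ ≤ m⁻¹ * (m * (((k : ℝ) + 1) / ((n : ℝ) + 1))) :=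
            mul_le_mul_of_nonneg_left hIb (inv_nonneg.2 hpos.le)
      _ = ((k : ℝ) + 1) / ((n : ℝ) + 1) := by field_simp

end AuxApprox


/-- Every bounded random variable is the `L^∞`-limit of a
sequence of finitely valued random variables dominating it in the concave
order. -/
theorem exists_finitelyValued_approx_concaveOrdGE
    {Ω : Type*} [MeasurableSpace Ω] (μ : Measure Ω) [IsProbabilityMeasure μ]
    (X : Ω → ℝ) (hX : MemLp X ∞ μ) :
    ∃ Xs : ℕ → Ω → ℝ,
      (∀ n, Measurable (Xs n)) ∧
      (∀ n, (Set.range (Xs n)).Finite) ∧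
      Tendsto (fun n => eLpNorm (fun ω => Xs n ω - X ω) ∞ μ) atTop (nhds 0) ∧
      (∀ n, ConcaveOrdGE μ (Xs n) X) := by
  classical
  set C : ℝ := (eLpNorm X ∞ μ).toReal with hCdef
  have hC0 : 0 ≤ C := ENNReal.toReal_nonneg
  have haeX : ∀ᵐ ω ∂μ, |X ω| ≤ C := by
    have h1 : ∀ᵐ ω ∂μ, (‖X ω‖₊ : ℝ≥0∞) ≤ eLpNormEssSup X μ := ae_le_eLpNormEssSup
    have hfin : eLpNormEssSup X μ ≠ ⊤ := by
      have h2 := hX.2; rw [eLpNorm_exponent_top] at h2; exact h2.ne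
    filter_upwards [h1] with ω hω
    have h3 : ((‖X ω‖₊ : ℝ≥0∞)).toReal ≤ (eLpNormEssSup X μ).toReal :=
      ENNReal.toReal_mono hfin hω
    simpa [hCdef, eLpNorm_exponent_top, Real.norm_eq_abs] using h3
  obtain ⟨Y0, hY0m, hXY0⟩ : ∃ Y0, StronglyMeasurable Y0 ∧ X =ᵐ[μ] Y0 :=
    ⟨hX.1.mk X, hX.1.stronglyMeasurable_mk, hX.1.ae_eq_mk⟩
  set Y : Ω → ℝ := fun ω => max (-C) (min C (Y0 ω)) with hYdef
  have hYm : Measurable Y := measurable_const.max (measurable_const.min hY0m.measurable)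
  have hYb : ∀ ω, |Y ω| ≤ C := by
    intro ω
    rw [abs_le]
    exact ⟨le_max_left _ _, max_le (by linarith) (min_le_left _ _)⟩
  have hXY : X =ᵐ[μ] Y := by
    filter_upwards [hXY0, haeX] with ω h1 h2
    have h2' := abs_le.1 h2
    simp only [hYdef, ← h1]
    rw [min_eq_right h2'.2, max_eq_right h2'.1]
  have hYint : Integrable Y μ :=
    ⟨hYm.aestronglyMeasurable, HasFiniteIntegral.of_bounded (C := C)
      (ae_of_all _ fun ω => by simpa [Real.norm_eq_abs] using hYb ω)⟩
  refine ⟨fun n ω => cellVal μ Y n ⌊Y ω * ((n : ℝ) + 1)⌋, ?_, ?_, ?_, ?_⟩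
  · intro n
    exact (measurable_from_top (f := cellVal μ Y n)).comp ((hYm.mul_const _).floor)
  · intro n
    apply Set.Finite.subset ((Set.finite_Icc ⌊-C * ((n : ℝ) + 1)⌋ ⌊C * ((n : ℝ) + 1)⌋).image
      (cellVal μ Y n))
    rintro x ⟨ω, rfl⟩
    refine ⟨⌊Y ω * ((n : ℝ) + 1)⌋, ?_, rfl⟩
    have hb := abs_le.1 (hYb ω)
    have hnp := npos n
    exact ⟨Int.floor_le_floor (by nlinarith), Int.floor_le_floor (by nlinarith)⟩
  · have key : ∀ n : ℕ, ∀ᵐ ω ∂μ,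
        ‖cellVal μ Y n ⌊Y ω * ((n : ℝ) + 1)⌋ - X ω‖ ≤ 1 / ((n : ℝ) + 1) := by
      intro n
      filter_upwards [hXY] with ω hωXY
      set k := ⌊Y ω * ((n : ℝ) + 1)⌋ with hk
      have h1 := mem_approxCell_bounds (Y := Y) (n := n) (k := k) rfl
      have h2 := cellVal_mem_Icc μ hYm hYint n k
      have hw : ((k : ℝ) + 1) / ((n : ℝ) + 1) - (k : ℝ) / ((n : ℝ) + 1) = 1 / ((n : ℝ) + 1) := by
        ring
      rw [hωXY, Real.norm_eq_abs, abs_le]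
      obtain ⟨a1, a2⟩ := h1
      obtain ⟨b1, b2⟩ := h2
      constructor <;> linarith
    have hb : ∀ n : ℕ, eLpNorm (fun ω => cellVal μ Y n ⌊Y ω * ((n : ℝ) + 1)⌋ - X ω) ∞ μ
        ≤ ENNReal.ofReal (1 / ((n : ℝ) + 1)) := fun n => by
      rw [eLpNorm_exponent_top]
      exact eLpNormEssSup_le_of_ae_bound (key n)
    refine tendsto_of_tendsto_of_tendsto_of_le_of_le tendsto_const_nhds ?_ (fun n => zero_le) hb
    have := ENNReal.tendsto_ofReal (tendsto_one_div_add_atTop_nhds_zero_nat)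
    simpa using this
  · intro n u hu
    have hucont : Continuous u := by
      have h := hu.continuousOn isOpen_univ
      rwa [continuousOn_univ] at h
    obtain ⟨M, hM⟩ := (isCompact_Icc : IsCompact (Set.Icc (-C) C)).exists_bound_of_continuousOn
      hucont.continuousOn
    have hintuY : Integrable (fun ω => u (Y ω)) μ := by
      refine ⟨(hucont.measurable.comp hYm).aestronglyMeasurable,
        HasFiniteIntegral.of_bounded (C := M) (ae_of_all _ fun ω => ?_)⟩
      exact hM _ (Set.mem_Icc.2 (abs_le.1 (hYb ω)))
    have hEX : ∫ ω, u (X ω) ∂μ = ∫ ω, u (Y ω) ∂μ :=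
      integral_congr_ae (hXY.mono fun ω h => congrArg u h)
    rw [hEX]
    set S : Finset ℤ := Finset.Icc ⌊-C * ((n : ℝ) + 1)⌋ ⌊C * ((n : ℝ) + 1)⌋ with hS
    have hmemS : ∀ ω, ⌊Y ω * ((n : ℝ) + 1)⌋ ∈ S := by
      intro ω
      have hbb := abs_le.1 (hYb ω)
      have hnp := npos n
      exact Finset.mem_Icc.2 ⟨Int.floor_le_floor (by nlinarith), Int.floor_le_floor (by nlinarith)⟩
    have hcover : (⋃ k ∈ S, approxCell Y n k) = Set.univ := by
      ext ω
      simp only [Set.mem_iUnion, Set.mem_univ, iff_true]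
      exact ⟨_, hmemS ω, rfl⟩
    have hdisj : Set.Pairwise ↑S (Function.onFun Disjoint (approxCell Y n)) := by
      intro a _ b _ hab
      simp only [Function.onFun]
      rw [Set.disjoint_left]
      intro ω ha hb'
      exact hab ((Eq.symm ha).trans hb')
    have hdecomp : ∀ f : Ω → ℝ, (∀ k ∈ S, IntegrableOn f (approxCell Y n k) μ) →
        ∫ ω, f ω ∂μ = ∑ k ∈ S, ∫ ω in approxCell Y n k, f ω ∂μ := by
      intro f hf
      rw [← setIntegral_univ (μ := μ) (f := f), ← hcover,
        integral_biUnion_finset S (fun k _ => measurable_approxCell hYm n k) hdisj hf]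
    have hXsint : ∀ k ∈ S,
        IntegrableOn (fun ω => u (cellVal μ Y n ⌊Y ω * ((n : ℝ) + 1)⌋)) (approxCell Y n k) μ := by
      intro k _
      apply ((integrableOn_const (C := u (cellVal μ Y n k))
        (measure_ne_top μ _))).congr_fun ?_ (measurable_approxCell hYm n k)
      intro ω hω
      exact congrArg (fun j => u (cellVal μ Y n j)) (Eq.symm hω)
    rw [hdecomp _ (fun k _ => hintuY.integrableOn), hdecomp _ hXsint]
    apply Finset.sum_le_sum
    intro k _
    by_cases h : μ (approxCell Y n k) = 0
    · have hres : μ.restrict (approxCell Y n k) = 0 := Measure.restrict_eq_zero.2 h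
      simp [hres]
    · set A := approxCell Y n k with hAdef
      have hAm := measurable_approxCell hYm n k
      have hfin : μ A ≠ ⊤ := measure_ne_top μ A
      have hjensen := hu.set_average_mem_hypograph hucont.continuousOn isClosed_univ h hfin
        (ae_of_all _ fun ω => Set.mem_univ (Y ω)) hYint.integrableOn hintuY.integrableOn
      have havg : (⨍ ω in A, Y ω ∂μ) = cellVal μ Y n k := by
        rw [setAverage_eq, smul_eq_mul]
        simp [cellVal, hAdef, measureReal_def, show μ (approxCell Y n k) ≠ 0 from h]
      have hrhs : ∫ ω in A, u (cellVal μ Y n ⌊Y ω * ((n : ℝ) + 1)⌋) ∂μ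
          = (μ A).toReal * u (cellVal μ Y n k) := by
        rw [setIntegral_congr_fun hAm
          (fun ω hω => congrArg (fun j => u (cellVal μ Y n j)) hω),
          setIntegral_const, smul_eq_mul, measureReal_def]
      have hlhs : ∫ ω in A, u (Y ω) ∂μ = (μ A).toReal * ⨍ ω in A, u (Y ω) ∂μ := by
        rw [setAverage_eq, smul_eq_mul, measureReal_def, ← mul_assoc,
          mul_inv_cancel₀ (ENNReal.toReal_ne_zero.2 ⟨h, hfin⟩), one_mul]
      rw [hlhs, hrhs]
      have hj2 : (⨍ ω in A, u (Y ω) ∂μ) ≤ u (cellVal μ Y n k) := havg ▸ hjensen.2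
      exact mul_le_mul_of_nonneg_left hj2 ENNReal.toReal_nonneg
end

section
/- Let X₁, X₂, Y₁, Y₂ be integrable random variables such that the pair (X₁,X₂) is negatively quadrant dependent, the pair (Y₁,Y₂) is independent, X₁ ≥_cv Y₁, and X₂ ≥_cv Y₂. Then X₁+X₂ ≥_cv Y₁+Y₂, i.e., E[u(X₁+X₂)] ≥ E[u(Y₁+Y₂)] for every concave u : ℝ → ℝ for which both expectations exist and are finite. -/
open MeasureTheory ProbabilityTheory Filter
open scoped ENNReal

/-- `X` dominates `Y` in the concave order, for integrable random variables:
the comparison holds for every concave `u` making both expectations finite. -/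
def ConcaveOrdGE' {Ω : Type*} [MeasurableSpace Ω] (μ : Measure Ω) (X Y : Ω → ℝ) : Prop :=
  ∀ u : ℝ → ℝ, ConcaveOn ℝ Set.univ u →
    Integrable (fun ω => u (X ω)) μ → Integrable (fun ω => u (Y ω)) μ →
    (∫ ω, u (Y ω) ∂μ) ≤ ∫ ω, u (X ω) ∂μ


section AuxNQD
open Set Finset


lemma affine_concaveOn (a b : ℝ) : ConcaveOn ℝ Set.univ (fun x : ℝ => a * x + b) := by
  refine ⟨convex_univ, fun x _ y _ p q hp hq hpq => ?_⟩
  simp only [smul_eq_mul]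
  have : p * (a * x + b) + q * (a * y + b) = a * (p * x + q * y) + b := by
    linear_combination b * hpq
  linarith

lemma affine_convexOn (a b : ℝ) : ConvexOn ℝ Set.univ (fun x : ℝ => a * x + b) := by
  refine ⟨convex_univ, fun x _ y _ p q hp hq hpq => ?_⟩
  simp only [smul_eq_mul]
  have : p * (a * x + b) + q * (a * y + b) = a * (p * x + q * y) + b := by
    linear_combination b * hpq
  linarith

lemma posPart_convexOn (t : ℝ) : ConvexOn ℝ Set.univ (fun x : ℝ => max (x - t) 0) := by
  have h1 : ConvexOn ℝ Set.univ (fun x : ℝ => x - t) := by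
    have := affine_convexOn 1 (-t)
    simpa [sub_eq_add_neg] using this
  have h2 : ConvexOn ℝ (Set.univ : Set ℝ) (fun _ => (0:ℝ)) := convexOn_const _ convex_univ
  simpa [Pi.sup_def] using h1.sup h2

lemma negPart_convexOn (t : ℝ) : ConvexOn ℝ Set.univ (fun x : ℝ => max (t - x) 0) := by
  have h1 : ConvexOn ℝ Set.univ (fun x : ℝ => t - x) := by
    have := affine_convexOn (-1) t
    simpa [sub_eq_add_neg, neg_mul, add_comm] using this
  have h2 : ConvexOn ℝ (Set.univ : Set ℝ) (fun _ => (0:ℝ)) := convexOn_const _ convex_univ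
  simpa [Pi.sup_def] using h1.sup h2

lemma ofReal_max_zero (x : ℝ) : ENNReal.ofReal (max x 0) = ENNReal.ofReal x := by
  rcases le_total x 0 with h | h
  · simp [max_eq_right h, ENNReal.ofReal_eq_zero.mpr h]
  · simp [max_eq_left h]

lemma abs_posPart_sub (a b : ℝ) : |max a 0 - max b 0| ≤ |a - b| := abs_max_sub_max_le_abs a b 0

lemma sum_id_right (r : ℝ → ℝ) (δ x : ℝ) : ∀ m : ℕ,
    ∑ k ∈ Finset.range m, (r (k * δ) - r ((k + 1) * δ)) * (x - (k + 1) * δ)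
      = r 0 * x - (δ * ∑ k ∈ Finset.range m, r (k * δ) + r (m * δ) * (x - m * δ)) := by
  intro m
  induction m with
  | zero => simp
  | succ m ih =>
    rw [Finset.sum_range_succ, ih, Finset.sum_range_succ]
    push_cast
    ring

lemma sum_id_left (r : ℝ → ℝ) (δ x : ℝ) : ∀ m : ℕ,
    ∑ j ∈ Finset.range m, (r (-((j + 1) * δ)) - r (-(j * δ))) * (-((j + 1) * δ) - x)
      = r 0 * x + δ * ∑ j ∈ Finset.range m, r (-(j * δ)) + r (-(m * δ)) * (-(m * δ) - x) := by
  intro m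
  induction m with
  | zero => simp
  | succ m ih =>
    rw [Finset.sum_range_succ, ih, Finset.sum_range_succ]
    push_cast
    ring

noncomputable def rD' (u : ℝ → ℝ) (q : ℝ) : ℝ :=
  sInf ((fun y => (u q - u y) / (q - y)) '' Iio q)


section rDlem
variable {u : ℝ → ℝ}

private lemma slope_cmp (hu : ConcaveOn ℝ Set.univ u) {y q z : ℝ} (h1 : y < q) (h2 : q < z) :
    (u z - u q) / (z - q) ≤ (u q - u y) / (q - y) :=
  hu.slope_anti_adjacent (mem_univ y) (mem_univ z) h1 h2

lemma rD'_bddBelow (hu : ConcaveOn ℝ Set.univ u) (q : ℝ) :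
    BddBelow ((fun y => (u q - u y) / (q - y)) '' Iio q) := by
  refine ⟨(u (q+1) - u q) / ((q+1) - q), ?_⟩
  rintro r ⟨y, hy, rfl⟩
  exact slope_cmp hu hy (lt_add_one q)

lemma rD'_nonempty (q : ℝ) :
    ((fun y => (u q - u y) / (q - y)) '' Iio q).Nonempty :=
  ⟨_, ⟨q - 1, by simp, rfl⟩⟩

/-- the tangent line at `q` lies above `u`. -/
lemma rD'_tangent (hu : ConcaveOn ℝ Set.univ u) (x q : ℝ) :
    u x ≤ u q + rD' u q * (x - q) := by
  rcases lt_trichotomy x q with h | h | h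
  · have hle : rD' u q ≤ (u q - u x) / (q - x) := csInf_le (rD'_bddBelow hu q) ⟨x, h, rfl⟩
    have hpos : (0:ℝ) < q - x := by linarith
    have := (le_div_iff₀ hpos).mp hle
    nlinarith
  · simp [h]
  · have hge : (u x - u q) / (x - q) ≤ rD' u q := by
      refine le_csInf (rD'_nonempty q) ?_
      rintro r ⟨y, hy, rfl⟩
      exact slope_cmp hu hy h
    have hpos : (0:ℝ) < x - q := by linarith
    have := (div_le_iff₀ hpos).mp hge
    nlinarith

lemma rD'_antitone (hu : ConcaveOn ℝ Set.univ u) : Antitone (rD' u) := by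
  intro a b hab
  rcases eq_or_lt_of_le hab with rfl | hab
  · exact le_refl _
  have h1 : rD' u b ≤ (u b - u a) / (b - a) := csInf_le (rD'_bddBelow hu b) ⟨a, hab, rfl⟩
  have h2 : (u b - u a) / (b - a) ≤ rD' u a := by
    refine le_csInf (rD'_nonempty a) ?_
    rintro r ⟨y, hy, rfl⟩
    exact slope_cmp hu hy hab
  linarith

end rDlem

section telescope
variable {u : ℝ → ℝ}

lemma telescope_right
    (tang : ∀ x q : ℝ, u x ≤ u q + rD' u q * (x - q))
    (anti : Antitone (rD' u))
    (δ : ℝ) (hδ : 0 < δ) (x : ℝ) (hx : 0 ≤ x) :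
    u x ≤ u 0 + (δ * ∑ k ∈ Finset.range ⌊x/δ⌋₊, rD' u (k * δ)
        + rD' u (⌊x/δ⌋₊ * δ) * (x - ⌊x/δ⌋₊ * δ))
    ∧ u 0 + (δ * ∑ k ∈ Finset.range ⌊x/δ⌋₊, rD' u (k * δ)
        + rD' u (⌊x/δ⌋₊ * δ) * (x - ⌊x/δ⌋₊ * δ))
      ≤ u x + δ * (rD' u 0 - rD' u x) := by
  set K := ⌊x/δ⌋₊ with hK
  have hK1 : (K : ℝ) * δ ≤ x := by
    have := Nat.floor_le (div_nonneg hx hδ.le)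
    calc (K:ℝ) * δ ≤ (x/δ) * δ := by nlinarith
    _ = x := by field_simp
  have hK2 : x < ((K : ℝ) + 1) * δ := by
    have := Nat.lt_floor_add_one (x/δ)
    calc x = (x/δ) * δ := by field_simp
    _ < ((K:ℝ) + 1) * δ := by nlinarith
  have tel : ∑ k ∈ Finset.range K, (u ((k+1 : ℕ) * δ) - u (k * δ)) = u (K * δ) - u 0 := by
    have := Finset.sum_range_sub (f := fun k : ℕ => u (k * δ)) K
    simpa using this
  have h2 : ∀ k : ℕ, u ((k+1 : ℕ) * δ) - u (k * δ) ≤ δ * rD' u (k * δ) := by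
    intro k
    have := tang ((k+1 : ℕ) * δ) (k * δ)
    have e : ((k+1 : ℕ) : ℝ) * δ - (k : ℝ) * δ = δ := by push_cast; ring
    rw [e] at this
    linarith [this, mul_comm δ (rD' u ((k:ℝ) * δ))]
  have h3 : ∀ k : ℕ, δ * rD' u ((k+1 : ℕ) * δ) ≤ u ((k+1 : ℕ) * δ) - u (k * δ) := by
    intro k
    have := tang ((k : ℕ) * δ) ((k+1 : ℕ) * δ)
    have e : ((k : ℕ) : ℝ) * δ - ((k+1 : ℕ) : ℝ) * δ = -δ := by push_cast; ring
    rw [e] at this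
    have := mul_comm δ (rD' u (((k+1:ℕ):ℝ) * δ))
    nlinarith
  have hsum2 : u (K * δ) - u 0 ≤ ∑ k ∈ Finset.range K, δ * rD' u (k * δ) := by
    rw [← tel]; exact Finset.sum_le_sum (fun k _ => h2 k)
  have hsum3 : ∑ k ∈ Finset.range K, δ * rD' u ((k+1 : ℕ) * δ) ≤ u (K * δ) - u 0 := by
    rw [← tel]; exact Finset.sum_le_sum (fun k _ => h3 k)
  have tel2 : ∑ k ∈ Finset.range K, (rD' u (k * δ) - rD' u ((k+1 : ℕ) * δ))
      = rD' u 0 - rD' u (K * δ) := by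
    have := Finset.sum_range_sub' (f := fun k : ℕ => rD' u (k * δ)) K
    simpa using this
  have htanK : u x ≤ u (K * δ) + rD' u (K * δ) * (x - K * δ) := tang x (K * δ)
  have htanx : u (K * δ) ≤ u x + rD' u x * ((K : ℝ) * δ - x) := tang ((K : ℝ) * δ) x
  have hrdKx : rD' u x ≤ rD' u ((K : ℝ) * δ) := anti hK1
  have hxK : x - (K : ℝ) * δ ≤ δ := by nlinarith
  have hxK0 : 0 ≤ x - (K : ℝ) * δ := by linarith
  constructor
  · rw [Finset.mul_sum]
    linarith [hsum2, htanK]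
  · have e1 : δ * ∑ k ∈ Finset.range K, rD' u (k * δ)
        = ∑ k ∈ Finset.range K, δ * (rD' u (k * δ) - rD' u ((k+1:ℕ) * δ))
          + ∑ k ∈ Finset.range K, δ * rD' u ((k+1:ℕ) * δ) := by
      rw [Finset.mul_sum, ← Finset.sum_add_distrib]
      congr 1; ext k; ring
    have e2 : ∑ k ∈ Finset.range K, δ * (rD' u (k * δ) - rD' u ((k+1:ℕ) * δ))
        = δ * (rD' u 0 - rD' u (K * δ)) := by
      rw [← Finset.mul_sum, tel2]
    have hmul2 : (rD' u ((K:ℝ) * δ) - rD' u x) * (x - (K:ℝ)*δ)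
        ≤ (rD' u ((K:ℝ) * δ) - rD' u x) * δ :=
      mul_le_mul_of_nonneg_left hxK (by linarith)
    rw [e1, e2]
    nlinarith [hsum3, htanx, hmul2]

lemma telescope_left
    (tang : ∀ x q : ℝ, u x ≤ u q + rD' u q * (x - q))
    (anti : Antitone (rD' u))
    (δ : ℝ) (hδ : 0 < δ) (x : ℝ) (hx : x ≤ 0) :
    u x ≤ u 0 - (δ * ∑ j ∈ Finset.range ⌊(-x)/δ⌋₊, rD' u (-(j * δ))
        + rD' u (-(⌊(-x)/δ⌋₊ * δ)) * (-(⌊(-x)/δ⌋₊ * δ) - x))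
    ∧ u 0 - (δ * ∑ j ∈ Finset.range ⌊(-x)/δ⌋₊, rD' u (-(j * δ))
        + rD' u (-(⌊(-x)/δ⌋₊ * δ)) * (-(⌊(-x)/δ⌋₊ * δ) - x))
      ≤ u x + δ * (rD' u x - rD' u 0) := by
  set J := ⌊(-x)/δ⌋₊ with hJ
  have hJ1 : (J : ℝ) * δ ≤ -x := by
    have := Nat.floor_le (div_nonneg (neg_nonneg.mpr hx) hδ.le)
    calc (J:ℝ) * δ ≤ ((-x)/δ) * δ := by nlinarith
    _ = -x := by field_simp
  have hJ2 : -x < ((J : ℝ) + 1) * δ := by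
    have := Nat.lt_floor_add_one ((-x)/δ)
    calc -x = ((-x)/δ) * δ := by field_simp
    _ < ((J:ℝ) + 1) * δ := by nlinarith
  have tel : ∑ j ∈ Finset.range J, (u (-((j+1 : ℕ) * δ)) - u (-(j * δ)))
      = u (-(J * δ)) - u 0 := by
    have := Finset.sum_range_sub (f := fun j : ℕ => u (-(j * δ))) J
    simpa using this
  have h2 : ∀ j : ℕ, u (-(j * δ)) - u (-((j+1 : ℕ) * δ)) ≤ δ * rD' u (-((j+1:ℕ) * δ)) := by
    intro j
    have := tang (-((j:ℕ) * δ)) (-((j+1 : ℕ) * δ))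
    have e : (-(((j:ℕ) : ℝ) * δ)) - (-(((j+1 : ℕ) : ℝ) * δ)) = δ := by push_cast; ring
    rw [e] at this
    linarith [this, mul_comm δ (rD' u (-(((j+1:ℕ):ℝ) * δ)))]
  have h3 : ∀ j : ℕ, δ * rD' u (-((j:ℕ) * δ)) ≤ u (-(j * δ)) - u (-((j+1 : ℕ) * δ)) := by
    intro j
    have := tang (-(((j+1:ℕ)) * δ)) (-((j : ℕ) * δ))
    have e : (-(((j+1 : ℕ) : ℝ) * δ)) - (-(((j:ℕ) : ℝ) * δ)) = -δ := by push_cast; ring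
    rw [e] at this
    have := mul_comm δ (rD' u (-(((j:ℕ):ℝ) * δ)))
    nlinarith
  have hsum2 : u 0 - u (-((J:ℝ) * δ)) ≤ ∑ j ∈ Finset.range J, δ * rD' u (-((j+1:ℕ) * δ)) := by
    have : ∑ j ∈ Finset.range J, (u (-(j * δ)) - u (-((j+1 : ℕ) * δ)))
        ≤ ∑ j ∈ Finset.range J, δ * rD' u (-((j+1:ℕ) * δ)) :=
      Finset.sum_le_sum (fun j _ => h2 j)
    have e : ∑ j ∈ Finset.range J, (u (-(j * δ)) - u (-((j+1 : ℕ) * δ)))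
        = u 0 - u (-((J:ℝ) * δ)) := by
      have := tel
      have e2 : ∑ j ∈ Finset.range J, (u (-(j * δ)) - u (-((j+1 : ℕ) * δ)))
          = -∑ j ∈ Finset.range J, (u (-((j+1 : ℕ) * δ)) - u (-(j * δ))) := by
        rw [← Finset.sum_neg_distrib]
        congr 1; ext j; ring
      rw [e2, this]; ring
    linarith [e ▸ this]
  have hsum3 : ∑ j ∈ Finset.range J, δ * rD' u (-((j:ℕ) * δ)) ≤ u 0 - u (-((J:ℝ) * δ)) := by
    have : ∑ j ∈ Finset.range J, δ * rD' u (-((j:ℕ) * δ))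
        ≤ ∑ j ∈ Finset.range J, (u (-(j * δ)) - u (-((j+1 : ℕ) * δ))) :=
      Finset.sum_le_sum (fun j _ => h3 j)
    have e2 : ∑ j ∈ Finset.range J, (u (-(j * δ)) - u (-((j+1 : ℕ) * δ)))
        = -∑ j ∈ Finset.range J, (u (-((j+1 : ℕ) * δ)) - u (-(j * δ))) := by
      rw [← Finset.sum_neg_distrib]
      congr 1; ext j; ring
    rw [e2, tel] at this
    linarith
  have tel2 : ∑ j ∈ Finset.range J, (rD' u (-((j+1:ℕ) * δ)) - rD' u (-((j:ℕ) * δ)))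
      = rD' u (-((J:ℝ) * δ)) - rD' u 0 := by
    have := Finset.sum_range_sub (f := fun j : ℕ => rD' u (-(j * δ))) J
    simpa using this
  have htanJ : u x ≤ u (-((J:ℝ) * δ)) + rD' u (-((J:ℝ) * δ)) * (x - (-((J:ℝ) * δ))) :=
    tang x (-((J:ℝ) * δ))
  have htanx : u (-((J:ℝ) * δ)) ≤ u x + rD' u x * ((-((J:ℝ) * δ)) - x) := tang (-((J:ℝ) * δ)) x
  have hrdJx : rD' u (-((J:ℝ) * δ)) ≤ rD' u x := anti (by linarith)
  have hxJ : (-((J:ℝ) * δ)) - x ≤ δ := by nlinarith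
  have hxJ0 : 0 ≤ (-((J:ℝ) * δ)) - x := by linarith
  constructor
  · have e1 : δ * ∑ j ∈ Finset.range J, rD' u (-(j * δ))
        = ∑ j ∈ Finset.range J, δ * rD' u (-((j:ℕ) * δ)) := by rw [Finset.mul_sum]
    rw [e1]
    nlinarith [hsum3, htanJ]
  · have e1 : δ * ∑ j ∈ Finset.range J, rD' u (-(j * δ))
        = -∑ j ∈ Finset.range J, δ * (rD' u (-((j+1:ℕ) * δ)) - rD' u (-((j:ℕ) * δ)))
          + ∑ j ∈ Finset.range J, δ * rD' u (-((j+1:ℕ) * δ)) := by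
      rw [Finset.mul_sum, ← Finset.sum_neg_distrib, ← Finset.sum_add_distrib]
      congr 1; ext j; ring
    have e2 : ∑ j ∈ Finset.range J, δ * (rD' u (-((j+1:ℕ) * δ)) - rD' u (-((j:ℕ) * δ)))
        = δ * (rD' u (-((J:ℝ) * δ)) - rD' u 0) := by
      rw [← Finset.mul_sum, tel2]
    have hmul2 : (rD' u x - rD' u (-((J:ℝ) * δ))) * ((-((J:ℝ) * δ)) - x)
        ≤ (rD' u x - rD' u (-((J:ℝ) * δ))) * δ :=
      mul_le_mul_of_nonneg_left hxJ (by linarith)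
    rw [e1, e2]
    nlinarith [hsum2, htanx, hmul2]

end telescope

noncomputable def aTerm (u : ℝ → ℝ) (δ : ℝ) (k : ℕ) (x : ℝ) : ℝ≥0∞ :=
  ENNReal.ofReal ((rD' u (k * δ) - rD' u ((k + 1 : ℕ) * δ)) * max (x - (k + 1 : ℕ) * δ) 0)

noncomputable def bTerm (u : ℝ → ℝ) (δ : ℝ) (j : ℕ) (x : ℝ) : ℝ≥0∞ :=
  ENNReal.ofReal ((rD' u (-((j + 1 : ℕ) * δ)) - rD' u (-(j * δ))) * max (-((j + 1 : ℕ) * δ) - x) 0)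

noncomputable def Psi (u : ℝ → ℝ) (δ : ℝ) (x : ℝ) : ℝ≥0∞ :=
  (∑' k, aTerm u δ k x) + ∑' j, bTerm u δ j x

noncomputable def uApp (u : ℝ → ℝ) (δ : ℝ) (x : ℝ) : ℝ :=
  u 0 + rD' u 0 * x - (Psi u δ x).toReal

section uApp
variable {u : ℝ → ℝ}

lemma measurable_aTerm (u : ℝ → ℝ) (δ : ℝ) (k : ℕ) : Measurable (aTerm u δ k) := by
  apply ENNReal.measurable_ofReal.comp
  exact (measurable_const.mul ((measurable_id.sub measurable_const).max measurable_const))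

lemma measurable_bTerm (u : ℝ → ℝ) (δ : ℝ) (j : ℕ) : Measurable (bTerm u δ j) := by
  apply ENNReal.measurable_ofReal.comp
  exact (measurable_const.mul ((measurable_const.sub measurable_id).max measurable_const))

lemma measurable_Psi (u : ℝ → ℝ) (δ : ℝ) : Measurable (Psi u δ) := by
  exact (Measurable.ennreal_tsum (fun k => measurable_aTerm u δ k)).add
    (Measurable.ennreal_tsum (fun j => measurable_bTerm u δ j))

lemma measurable_uApp (u : ℝ → ℝ) (δ : ℝ) : Measurable (uApp u δ) := by
  exact (measurable_const.add (measurable_const.mul measurable_id)).sub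
    ((measurable_Psi u δ).ennreal_toReal)

lemma psi_eq_right (anti : Antitone (rD' u)) {δ : ℝ} (hδ : 0 < δ) {x : ℝ} (hx : 0 ≤ x) :
    Psi u δ x = ENNReal.ofReal
      (∑ k ∈ Finset.range ⌊x/δ⌋₊, (rD' u (k * δ) - rD' u ((k + 1 : ℕ) * δ)) * (x - (k + 1 : ℕ) * δ))
      ∧ 0 ≤ ∑ k ∈ Finset.range ⌊x/δ⌋₊,
          (rD' u (k * δ) - rD' u ((k + 1 : ℕ) * δ)) * (x - (k + 1 : ℕ) * δ) := by
  set K := ⌊x/δ⌋₊ with hK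
  have hK2 : x < ((K : ℝ) + 1) * δ := by
    have := Nat.lt_floor_add_one (x/δ)
    calc x = (x/δ) * δ := by field_simp
    _ < ((K:ℝ) + 1) * δ := by nlinarith
  have hb0 : ∑' j, bTerm u δ j x = 0 := by
    have : ∀ j : ℕ, bTerm u δ j x = 0 := by
      intro j
      have harg : -((j + 1 : ℕ) * δ) - x ≤ 0 := by
        have : (0:ℝ) < ((j:ℝ) + 1) * δ := by positivity
        push_cast
        nlinarith
      unfold bTerm
      rw [max_eq_right harg]
      simp
    simp [this]
  have hterm0 : ∀ k ∉ Finset.range K, aTerm u δ k x = 0 := by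
    intro k hk
    rw [Finset.mem_range, not_lt] at hk
    have harg : x - (k + 1 : ℕ) * δ ≤ 0 := by
      have h1 : ((K:ℝ) + 1) * δ ≤ ((k:ℝ) + 1) * δ := by
        have : (K:ℝ) ≤ (k:ℝ) := by exact_mod_cast hk
        nlinarith
      push_cast
      push_cast at h1
      nlinarith
    unfold aTerm
    rw [max_eq_right harg]
    simp
  have hterm_in : ∀ k ∈ Finset.range K,
      aTerm u δ k x = ENNReal.ofReal
        ((rD' u (k * δ) - rD' u ((k + 1 : ℕ) * δ)) * (x - (k + 1 : ℕ) * δ)) := by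
    intro k hk
    rw [Finset.mem_range] at hk
    have harg : 0 ≤ x - (k + 1 : ℕ) * δ := by
      have h1 : ((k:ℝ) + 1) ≤ (K:ℝ) := by exact_mod_cast hk
      have hK1 : (K : ℝ) * δ ≤ x := by
        have := Nat.floor_le (div_nonneg hx hδ.le)
        calc (K:ℝ) * δ ≤ (x/δ) * δ := by nlinarith
        _ = x := by field_simp
      push_cast
      nlinarith
    unfold aTerm
    rw [max_eq_left harg]
  have hnn : ∀ k ∈ Finset.range K,
      0 ≤ (rD' u (k * δ) - rD' u ((k + 1 : ℕ) * δ)) * (x - (k + 1 : ℕ) * δ) := by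
    intro k hk
    rw [Finset.mem_range] at hk
    have h1 : rD' u ((k + 1 : ℕ) * δ) ≤ rD' u (k * δ) := by
      apply anti
      push_cast
      nlinarith
    have harg : 0 ≤ x - (k + 1 : ℕ) * δ := by
      have h1 : ((k:ℝ) + 1) ≤ (K:ℝ) := by exact_mod_cast hk
      have hK1 : (K : ℝ) * δ ≤ x := by
        have := Nat.floor_le (div_nonneg hx hδ.le)
        calc (K:ℝ) * δ ≤ (x/δ) * δ := by nlinarith
        _ = x := by field_simp
      push_cast
      nlinarith
    exact mul_nonneg (by linarith) harg
  constructor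
  · unfold Psi
    rw [hb0, add_zero, tsum_eq_sum hterm0, ENNReal.ofReal_sum_of_nonneg hnn]
    exact Finset.sum_congr rfl hterm_in
  · exact Finset.sum_nonneg hnn

lemma psi_eq_left (anti : Antitone (rD' u)) {δ : ℝ} (hδ : 0 < δ) {x : ℝ} (hx : x ≤ 0) :
    Psi u δ x = ENNReal.ofReal
      (∑ j ∈ Finset.range ⌊(-x)/δ⌋₊,
        (rD' u (-((j + 1 : ℕ) * δ)) - rD' u (-(j * δ))) * (-((j + 1 : ℕ) * δ) - x))
      ∧ 0 ≤ ∑ j ∈ Finset.range ⌊(-x)/δ⌋₊,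
        (rD' u (-((j + 1 : ℕ) * δ)) - rD' u (-(j * δ))) * (-((j + 1 : ℕ) * δ) - x) := by
  set J := ⌊(-x)/δ⌋₊ with hJ
  have hJ1 : (J : ℝ) * δ ≤ -x := by
    have := Nat.floor_le (div_nonneg (neg_nonneg.mpr hx) hδ.le)
    calc (J:ℝ) * δ ≤ ((-x)/δ) * δ := by nlinarith
    _ = -x := by field_simp
  have hJ2 : -x < ((J : ℝ) + 1) * δ := by
    have := Nat.lt_floor_add_one ((-x)/δ)
    calc -x = ((-x)/δ) * δ := by field_simp
    _ < ((J:ℝ) + 1) * δ := by nlinarith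
  have ha0 : ∑' k, aTerm u δ k x = 0 := by
    have : ∀ k : ℕ, aTerm u δ k x = 0 := by
      intro k
      have harg : x - (k + 1 : ℕ) * δ ≤ 0 := by
        have : (0:ℝ) < ((k:ℝ) + 1) * δ := by positivity
        push_cast
        nlinarith
      unfold aTerm
      rw [max_eq_right harg]
      simp
    simp [this]
  have hterm0 : ∀ j ∉ Finset.range J, bTerm u δ j x = 0 := by
    intro j hj
    rw [Finset.mem_range, not_lt] at hj
    have harg : -((j + 1 : ℕ) * δ) - x ≤ 0 := by
      have h1 : ((J:ℝ) + 1) * δ ≤ ((j:ℝ) + 1) * δ := by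
        have : (J:ℝ) ≤ (j:ℝ) := by exact_mod_cast hj
        nlinarith
      push_cast
      push_cast at h1
      nlinarith
    unfold bTerm
    rw [max_eq_right harg]
    simp
  have hterm_in : ∀ j ∈ Finset.range J,
      bTerm u δ j x = ENNReal.ofReal
        ((rD' u (-((j + 1 : ℕ) * δ)) - rD' u (-(j * δ))) * (-((j + 1 : ℕ) * δ) - x)) := by
    intro j hj
    rw [Finset.mem_range] at hj
    have harg : 0 ≤ -((j + 1 : ℕ) * δ) - x := by
      have h1 : ((j:ℝ) + 1) ≤ (J:ℝ) := by exact_mod_cast hj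
      push_cast
      nlinarith
    unfold bTerm
    rw [max_eq_left harg]
  have hnn : ∀ j ∈ Finset.range J,
      0 ≤ (rD' u (-((j + 1 : ℕ) * δ)) - rD' u (-(j * δ))) * (-((j + 1 : ℕ) * δ) - x) := by
    intro j hj
    rw [Finset.mem_range] at hj
    have h1 : rD' u (-((j:ℕ) * δ)) ≤ rD' u (-((j + 1 : ℕ) * δ)) := by
      apply anti
      push_cast
      nlinarith
    have harg : 0 ≤ -((j + 1 : ℕ) * δ) - x := by
      have h1 : ((j:ℝ) + 1) ≤ (J:ℝ) := by exact_mod_cast hj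
      push_cast
      nlinarith
    exact mul_nonneg (by linarith) harg
  constructor
  · unfold Psi
    rw [ha0, zero_add, tsum_eq_sum hterm0, ENNReal.ofReal_sum_of_nonneg hnn]
    exact Finset.sum_congr rfl hterm_in
  · exact Finset.sum_nonneg hnn

lemma uApp_le_line (u : ℝ → ℝ) (δ x : ℝ) : uApp u δ x ≤ u 0 + rD' u 0 * x := by
  unfold uApp
  have : 0 ≤ (Psi u δ x).toReal := ENNReal.toReal_nonneg
  linarith

lemma Psi_ne_top (anti : Antitone (rD' u)) {δ : ℝ} (hδ : 0 < δ) (x : ℝ) :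
    Psi u δ x ≠ ⊤ := by
  rcases le_total 0 x with hx | hx
  · rw [(psi_eq_right anti hδ hx).1]; exact ENNReal.ofReal_ne_top
  · rw [(psi_eq_left anti hδ hx).1]; exact ENNReal.ofReal_ne_top

lemma uApp_bounds
    (tang : ∀ x q : ℝ, u x ≤ u q + rD' u q * (x - q))
    (anti : Antitone (rD' u))
    {δ : ℝ} (hδ : 0 < δ) (x : ℝ) :
    u x ≤ uApp u δ x ∧ uApp u δ x ≤ u x + δ * |rD' u 0 - rD' u x| := by
  rcases le_total 0 x with hx | hx
  · obtain ⟨hpsi, hnn⟩ := psi_eq_right anti hδ hx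
    have habs : |rD' u 0 - rD' u x| = rD' u 0 - rD' u x :=
      abs_of_nonneg (by linarith [anti hx])
    have hcast : ∑ k ∈ Finset.range ⌊x/δ⌋₊,
        (rD' u (k * δ) - rD' u ((k + 1 : ℕ) * δ)) * (x - (k + 1 : ℕ) * δ)
        = ∑ k ∈ Finset.range ⌊x/δ⌋₊,
        (rD' u (k * δ) - rD' u (((k:ℝ) + 1) * δ)) * (x - ((k:ℝ) + 1) * δ) := by
      refine Finset.sum_congr rfl (fun k _ => ?_)
      push_cast
      ring_nf
    have hid := sum_id_right (rD' u) δ x ⌊x/δ⌋₊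
    have huapp : uApp u δ x = u 0 + (δ * ∑ k ∈ Finset.range ⌊x/δ⌋₊, rD' u (k * δ)
        + rD' u (⌊x/δ⌋₊ * δ) * (x - ⌊x/δ⌋₊ * δ)) := by
      unfold uApp
      rw [hpsi, ENNReal.toReal_ofReal hnn, hcast]
      rw [hid]
      ring
    obtain ⟨hlo, hhi⟩ := telescope_right tang anti δ hδ x hx
    rw [huapp, habs]
    exact ⟨hlo, hhi⟩
  · obtain ⟨hpsi, hnn⟩ := psi_eq_left anti hδ hx
    have habs : |rD' u 0 - rD' u x| = rD' u x - rD' u 0 := by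
      rw [abs_of_nonpos (by linarith [anti hx] : rD' u 0 - rD' u x ≤ 0)]
      ring
    have hcast : ∑ j ∈ Finset.range ⌊(-x)/δ⌋₊,
        (rD' u (-((j + 1 : ℕ) * δ)) - rD' u (-(j * δ))) * (-((j + 1 : ℕ) * δ) - x)
        = ∑ j ∈ Finset.range ⌊(-x)/δ⌋₊,
        (rD' u (-(((j:ℝ) + 1) * δ)) - rD' u (-(j * δ))) * (-(((j:ℝ) + 1) * δ) - x) := by
      refine Finset.sum_congr rfl (fun j _ => ?_)
      push_cast
      ring_nf
    have hid := sum_id_left (rD' u) δ x ⌊(-x)/δ⌋₊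
    have huapp : uApp u δ x = u 0 - (δ * ∑ j ∈ Finset.range ⌊(-x)/δ⌋₊, rD' u (-(j * δ))
        + rD' u (-(⌊(-x)/δ⌋₊ * δ)) * (-(⌊(-x)/δ⌋₊ * δ) - x)) := by
      unfold uApp
      rw [hpsi, ENNReal.toReal_ofReal hnn, hcast]
      rw [hid]
      ring
    obtain ⟨hlo, hhi⟩ := telescope_left tang anti δ hδ x hx
    rw [huapp, habs]
    exact ⟨hlo, hhi⟩

lemma lint_cmp {Ω : Type*} [MeasurableSpace Ω] (μ : Measure Ω)
    {f g : Ω → ℝ} (hf : Integrable f μ) (hg : Integrable g μ)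
    (hf0 : 0 ≤ f) (hg0 : 0 ≤ g) (hfg : ∫ ω, f ω ∂μ ≤ ∫ ω, g ω ∂μ)
    {c : ℝ} (hc : 0 ≤ c) :
    ∫⁻ ω, ENNReal.ofReal (c * f ω) ∂μ ≤ ∫⁻ ω, ENNReal.ofReal (c * g ω) ∂μ := by
  have e1 : ∀ (h : Ω → ℝ), Integrable h μ → 0 ≤ h →
      ∫⁻ ω, ENNReal.ofReal (c * h ω) ∂μ = ENNReal.ofReal c * ENNReal.ofReal (∫ ω, h ω ∂μ) := by
    intro h hint hnn
    have : ∀ ω, ENNReal.ofReal (c * h ω) = ENNReal.ofReal c * ENNReal.ofReal (h ω) :=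
      fun ω => ENNReal.ofReal_mul hc
    simp_rw [this]
    rw [lintegral_const_mul' _ _ ENNReal.ofReal_ne_top,
      ← ofReal_integral_eq_lintegral_ofReal hint (Filter.Eventually.of_forall hnn)]
  rw [e1 f hf hf0, e1 g hg hg0]
  exact mul_le_mul_right (ENNReal.ofReal_le_ofReal hfg) _

lemma key_concave_order {Ω : Type*} [MeasurableSpace Ω] (μ : Measure Ω)
    [IsProbabilityMeasure μ] {S T : Ω → ℝ}
    (hSm : Measurable S) (hTm : Measurable T)
    (hS : Integrable S μ) (hT : Integrable T μ)
    (hm : ∫ ω, S ω ∂μ = ∫ ω, T ω ∂μ)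
    (hsl : ∀ t : ℝ, ∫ ω, max (S ω - t) 0 ∂μ ≤ ∫ ω, max (T ω - t) 0 ∂μ)
    {u : ℝ → ℝ} (hu : ConcaveOn ℝ Set.univ u)
    (huS : Integrable (fun ω => u (S ω)) μ) (huT : Integrable (fun ω => u (T ω)) μ) :
    ∫ ω, u (T ω) ∂μ ≤ ∫ ω, u (S ω) ∂μ := by
  have tang : ∀ x q : ℝ, u x ≤ u q + rD' u q * (x - q) := rD'_tangent hu
  have anti : Antitone (rD' u) := rD'_antitone hu
  -- integrability of positive parts
  have hposS : ∀ t : ℝ, Integrable (fun ω => max (S ω - t) 0) μ :=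
    fun t => (hS.sub (integrable_const t)).pos_part
  have hposT : ∀ t : ℝ, Integrable (fun ω => max (T ω - t) 0) μ :=
    fun t => (hT.sub (integrable_const t)).pos_part
  have hnegS : ∀ t : ℝ, Integrable (fun ω => max (t - S ω) 0) μ :=
    fun t => ((integrable_const t).sub hS).pos_part
  have hnegT : ∀ t : ℝ, Integrable (fun ω => max (t - T ω) 0) μ :=
    fun t => ((integrable_const t).sub hT).pos_part
  -- flipped stop-loss inequality
  have hsl2 : ∀ t : ℝ, ∫ ω, max (t - S ω) 0 ∂μ ≤ ∫ ω, max (t - T ω) 0 ∂μ := by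
    intro t
    have eS : ∫ ω, max (t - S ω) 0 ∂μ
        = ∫ ω, max (S ω - t) 0 ∂μ - (∫ ω, S ω ∂μ) + t := by
      have e : ∀ ω, max (t - S ω) 0 = max (S ω - t) 0 - (S ω - t) := by
        intro ω; rcases le_total (S ω) t with h | h
        · rw [max_eq_left (by linarith), max_eq_right (by linarith)]; ring
        · rw [max_eq_right (by linarith), max_eq_left (by linarith)]; ring
      simp_rw [e]
      have h1 : Integrable (fun ω => S ω - t) μ := hS.sub (integrable_const t)
      have h2 : Integrable (fun _ : Ω => t) μ := integrable_const t
      rw [integral_sub (hposS t) h1, integral_sub hS h2]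
      simp [measure_univ]
      ring
    have eT : ∫ ω, max (t - T ω) 0 ∂μ
        = ∫ ω, max (T ω - t) 0 ∂μ - (∫ ω, T ω ∂μ) + t := by
      have e : ∀ ω, max (t - T ω) 0 = max (T ω - t) 0 - (T ω - t) := by
        intro ω; rcases le_total (T ω) t with h | h
        · rw [max_eq_left (by linarith), max_eq_right (by linarith)]; ring
        · rw [max_eq_right (by linarith), max_eq_left (by linarith)]; ring
      simp_rw [e]
      have h1 : Integrable (fun ω => T ω - t) μ := hT.sub (integrable_const t)
      have h2 : Integrable (fun _ : Ω => t) μ := integrable_const t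
      rw [integral_sub (hposT t) h1, integral_sub hT h2]
      simp [measure_univ]
      ring
    rw [eS, eT, hm]
    linarith [hsl t]
  -- comparison of Psi-lintegrals, for every δ > 0
  have hPsiCmp : ∀ δ : ℝ, 0 < δ →
      ∫⁻ ω, Psi u δ (S ω) ∂μ ≤ ∫⁻ ω, Psi u δ (T ω) ∂μ := by
    intro δ hδ
    have hsplit : ∀ (Z : Ω → ℝ), Measurable Z →
        ∫⁻ ω, Psi u δ (Z ω) ∂μ
          = (∑' k, ∫⁻ ω, aTerm u δ k (Z ω) ∂μ) + ∑' j, ∫⁻ ω, bTerm u δ j (Z ω) ∂μ := by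
      intro Z hZ
      unfold Psi
      rw [lintegral_add_left (by
        exact (Measurable.ennreal_tsum (fun k => measurable_aTerm u δ k)).comp hZ)]
      rw [lintegral_tsum (f := fun k ω => aTerm u δ k (Z ω))
          (fun k => ((measurable_aTerm u δ k).comp hZ).aemeasurable),
        lintegral_tsum (f := fun j ω => bTerm u δ j (Z ω))
          (fun j => ((measurable_bTerm u δ j).comp hZ).aemeasurable)]
    rw [hsplit S hSm, hsplit T hTm]
    have ha : ∀ k : ℕ, ∫⁻ ω, aTerm u δ k (S ω) ∂μ ≤ ∫⁻ ω, aTerm u δ k (T ω) ∂μ := by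
      intro k
      have hd : 0 ≤ rD' u (k * δ) - rD' u ((k + 1 : ℕ) * δ) := by
        have : rD' u ((k+1:ℕ) * δ) ≤ rD' u (k * δ) := by
          apply anti; push_cast; nlinarith
        linarith
      exact lint_cmp μ (hposS _) (hposT _)
        (fun ω => le_max_right _ _) (fun ω => le_max_right _ _) (hsl _) hd
    have hb : ∀ j : ℕ, ∫⁻ ω, bTerm u δ j (S ω) ∂μ ≤ ∫⁻ ω, bTerm u δ j (T ω) ∂μ := by
      intro j
      have hd : 0 ≤ rD' u (-((j + 1 : ℕ) * δ)) - rD' u (-(j * δ)) := by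
        have : rD' u (-((j:ℕ) * δ)) ≤ rD' u (-((j + 1 : ℕ) * δ)) := by
          apply anti; push_cast; nlinarith
        linarith
      exact lint_cmp μ (hnegS _) (hnegT _)
        (fun ω => le_max_right _ _) (fun ω => le_max_right _ _) (hsl2 _) hd
    exact add_le_add (ENNReal.tsum_le_tsum ha) (ENNReal.tsum_le_tsum hb)
  -- the line `x ↦ u 0 + rD' u 0 * x` dominates `u` and `uApp`
  have hlineT : Integrable (fun ω => u 0 + rD' u 0 * T ω) μ :=
    (integrable_const _).add (hT.const_mul _)
  have hlineS : Integrable (fun ω => u 0 + rD' u 0 * S ω) μ :=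
    (integrable_const _).add (hS.const_mul _)
  have hu_le_line : ∀ x : ℝ, u x ≤ u 0 + rD' u 0 * x := by
    intro x
    have := tang x 0
    simpa using this
  have hPsiTop : ∀ δ : ℝ, 0 < δ → ∫⁻ ω, Psi u δ (T ω) ∂μ ≠ ⊤ := by
    intro δ hδ
    have hb : ∀ x : ℝ, Psi u δ x ≤ ENNReal.ofReal (u 0 + rD' u 0 * x - u x) := by
      intro x
      have h1 : (Psi u δ x).toReal = u 0 + rD' u 0 * x - uApp u δ x := by
        unfold uApp; ring
      have h2 : uApp u δ x ≥ u x := (uApp_bounds tang anti hδ x).1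
      calc Psi u δ x = ENNReal.ofReal ((Psi u δ x).toReal) :=
            (ENNReal.ofReal_toReal (Psi_ne_top anti hδ x)).symm
        _ ≤ ENNReal.ofReal (u 0 + rD' u 0 * x - u x) := by
            apply ENNReal.ofReal_le_ofReal; rw [h1]; linarith
    have hint : Integrable (fun ω => u 0 + rD' u 0 * T ω - u (T ω)) μ := hlineT.sub huT
    have : ∫⁻ ω, Psi u δ (T ω) ∂μ
        ≤ ∫⁻ ω, ENNReal.ofReal (u 0 + rD' u 0 * T ω - u (T ω)) ∂μ :=
      lintegral_mono (fun ω => hb (T ω))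
    have heq : ∫⁻ ω, ENNReal.ofReal (u 0 + rD' u 0 * T ω - u (T ω)) ∂μ
        = ENNReal.ofReal (∫ ω, (u 0 + rD' u 0 * T ω - u (T ω)) ∂μ) :=
      (ofReal_integral_eq_lintegral_ofReal hint
        (Filter.Eventually.of_forall (fun ω => by
          simp only [Pi.zero_apply]; linarith [hu_le_line (T ω)]))).symm
    rw [heq] at this
    exact ne_top_of_le_ne_top ENNReal.ofReal_ne_top this
  -- integral identity for uApp
  have hcomp : ∀ (δ : ℝ), 0 < δ → ∀ (Z : Ω → ℝ), Measurable Z → Integrable Z μ →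
      (∫⁻ ω, Psi u δ (Z ω) ∂μ ≠ ⊤) →
      ∫ ω, uApp u δ (Z ω) ∂μ
        = (u 0 + rD' u 0 * ∫ ω, Z ω ∂μ) - (∫⁻ ω, Psi u δ (Z ω) ∂μ).toReal := by
    intro δ hδ Z hZ hZint hZtop
    have hmeas : AEMeasurable (fun ω => Psi u δ (Z ω)) μ :=
      ((measurable_Psi u δ).comp hZ).aemeasurable
    have hPsiInt : Integrable (fun ω => (Psi u δ (Z ω)).toReal) μ :=
      integrable_toReal_of_lintegral_ne_top hmeas hZtop
    have e0 : ∀ ω, uApp u δ (Z ω)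
        = (u 0 + rD' u 0 * Z ω) - (Psi u δ (Z ω)).toReal := fun ω => rfl
    have hlineZ : Integrable (fun ω => u 0 + rD' u 0 * Z ω) μ :=
      (integrable_const _).add (hZint.const_mul _)
    simp_rw [e0]
    rw [integral_sub hlineZ hPsiInt]
    have e1 : ∫ ω, (u 0 + rD' u 0 * Z ω) ∂μ = u 0 + rD' u 0 * ∫ ω, Z ω ∂μ := by
      rw [integral_add (integrable_const _) (hZint.const_mul _), integral_const,
        integral_const_mul]
      simp [measure_univ]
    have e2 : ∫ ω, (Psi u δ (Z ω)).toReal ∂μ = (∫⁻ ω, Psi u δ (Z ω) ∂μ).toReal :=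
      integral_toReal hmeas
        (Filter.Eventually.of_forall (fun ω => lt_top_iff_ne_top.mpr (Psi_ne_top anti hδ _)))
    rw [e1, e2]
  -- the approximation inequality for every δ
  have hApp : ∀ δ : ℝ, 0 < δ → ∫ ω, uApp u δ (T ω) ∂μ ≤ ∫ ω, uApp u δ (S ω) ∂μ := by
    intro δ hδ
    have hStop : ∫⁻ ω, Psi u δ (S ω) ∂μ ≠ ⊤ :=
      ne_top_of_le_ne_top (hPsiTop δ hδ) (hPsiCmp δ hδ)
    rw [hcomp δ hδ T hTm hT (hPsiTop δ hδ), hcomp δ hδ S hSm hS hStop, hm]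
    have := ENNReal.toReal_mono (hPsiTop δ hδ) (hPsiCmp δ hδ)
    linarith
  -- pass to the limit δ = 1/(n+1)
  set δn : ℕ → ℝ := fun n => 1/((n:ℝ)+1) with hδn
  have hδnpos : ∀ n, 0 < δn n := fun n => by positivity
  have hδn0 : Filter.Tendsto δn Filter.atTop (nhds 0) :=
    tendsto_one_div_add_atTop_nhds_zero_nat
  have hptwise : ∀ x : ℝ, Filter.Tendsto (fun n => uApp u (δn n) x) Filter.atTop (nhds (u x)) := by
    intro x
    rw [tendsto_iff_dist_tendsto_zero]
    have hbd : ∀ n, dist (uApp u (δn n) x) (u x) ≤ δn n * |rD' u 0 - rD' u x| := by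
      intro n
      obtain ⟨h1, h2⟩ := uApp_bounds tang anti (hδnpos n) x
      rw [Real.dist_eq, abs_of_nonneg (by linarith)]
      linarith
    have hlim : Filter.Tendsto (fun n => δn n * |rD' u 0 - rD' u x|)
        Filter.atTop (nhds 0) := by
      have h := hδn0.mul_const |rD' u 0 - rD' u x|
      rwa [zero_mul] at h
    exact squeeze_zero (fun n => dist_nonneg) hbd hlim
  have hdom : ∀ (Z : Ω → ℝ), Measurable Z → Integrable Z μ →
      Integrable (fun ω => u (Z ω)) μ →
      Filter.Tendsto (fun n => ∫ ω, uApp u (δn n) (Z ω) ∂μ) Filter.atTop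
        (nhds (∫ ω, u (Z ω) ∂μ)) := by
    intro Z hZ hZint huZ
    refine tendsto_integral_of_dominated_convergence
      (fun ω => |u (Z ω)| + |u 0 + rD' u 0 * Z ω|)
      (fun n => ((measurable_uApp u (δn n)).comp hZ).aestronglyMeasurable)
      (huZ.abs.add ((integrable_const _).add (hZint.const_mul _)).abs)
      (fun n => Filter.Eventually.of_forall (fun ω => ?_))
      (Filter.Eventually.of_forall (fun ω => hptwise (Z ω)))
    have h1 := (uApp_bounds tang anti (hδnpos n) (Z ω)).1
    have h2 := uApp_le_line u (δn n) (Z ω)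
    have hgoal : |uApp u (δn n) (Z ω)| ≤ |u (Z ω)| + |u 0 + rD' u 0 * Z ω| := by
      rw [abs_le]
      constructor
      · have h4 := neg_abs_le (u (Z ω))
        have h3 : (0:ℝ) ≤ |u 0 + rD' u 0 * Z ω| := abs_nonneg _
        linarith
      · have h4 := le_abs_self (u 0 + rD' u 0 * Z ω)
        have h3 : (0:ℝ) ≤ |u (Z ω)| := abs_nonneg _
        linarith
    simpa [Real.norm_eq_abs] using hgoal
  exact le_of_tendsto_of_tendsto' (hdom T hTm hT huT) (hdom S hSm hS huS)
    (fun n => hApp (δn n) (hδnpos n))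

lemma nqd_flip {Ω : Type*} [MeasurableSpace Ω] (μ : Measure Ω) [IsProbabilityMeasure μ]
    {A B : Set Ω} (hA : MeasurableSet A) (hB : MeasurableSet B)
    (h : μ (Aᶜ ∩ Bᶜ) ≤ μ Aᶜ * μ Bᶜ) : μ (A ∩ B) ≤ μ A * μ B := by
  have fin : ∀ s : Set Ω, μ s ≠ ⊤ := fun s => measure_ne_top μ s
  have h1 : μ (A ∩ B) + μ (Aᶜ ∪ Bᶜ) = 1 := by
    rw [← Set.compl_inter, measure_add_measure_compl (hA.inter hB)]
    exact measure_univ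
  have h2 : μ (Aᶜ ∪ Bᶜ) + μ (Aᶜ ∩ Bᶜ) = μ Aᶜ + μ Bᶜ :=
    measure_union_add_inter _ hB.compl
  have h3 : μ A + μ Aᶜ = 1 := by rw [measure_add_measure_compl hA]; exact measure_univ
  have h4 : μ B + μ Bᶜ = 1 := by rw [measure_add_measure_compl hB]; exact measure_univ
  have t1 : (μ (A ∩ B)).toReal + (μ (Aᶜ ∪ Bᶜ)).toReal = 1 := by
    rw [← ENNReal.toReal_add (fin _) (fin _), h1]; simp
  have t2 : (μ (Aᶜ ∪ Bᶜ)).toReal + (μ (Aᶜ ∩ Bᶜ)).toReal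
      = (μ Aᶜ).toReal + (μ Bᶜ).toReal := by
    rw [← ENNReal.toReal_add (fin _) (fin _), ← ENNReal.toReal_add (fin _) (fin _), h2]
  have t3 : (μ A).toReal + (μ Aᶜ).toReal = 1 := by
    rw [← ENNReal.toReal_add (fin _) (fin _), h3]; simp
  have t4 : (μ B).toReal + (μ Bᶜ).toReal = 1 := by
    rw [← ENNReal.toReal_add (fin _) (fin _), h4]; simp
  have t5 : (μ (Aᶜ ∩ Bᶜ)).toReal ≤ (μ Aᶜ).toReal * (μ Bᶜ).toReal := by
    have := ENNReal.toReal_mono (by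
      exact ENNReal.mul_ne_top (fin _) (fin _)) h
    rwa [ENNReal.toReal_mul] at this
  have goal : (μ (A ∩ B)).toReal ≤ (μ A).toReal * (μ B).toReal := by
    have ha : (μ A).toReal = 1 - (μ Aᶜ).toReal := by linarith
    have hb : (μ B).toReal = 1 - (μ Bᶜ).toReal := by linarith
    rw [ha, hb]
    have expand : (1 - (μ Aᶜ).toReal) * (1 - (μ Bᶜ).toReal)
        = 1 - (μ Aᶜ).toReal - (μ Bᶜ).toReal + (μ Aᶜ).toReal * (μ Bᶜ).toReal := by ring
    linarith [expand]
  refine (ENNReal.toReal_le_toReal (fin _) (ENNReal.mul_ne_top (fin A) (fin B))).mp ?_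
  rw [ENNReal.toReal_mul]
  exact goal

lemma layer_cake {Ω : Type*} [MeasurableSpace Ω] (ν : Measure Ω) [SFinite ν]
    {Z₁ Z₂ : Ω → ℝ} (h1 : Measurable Z₁) (h2 : Measurable Z₂) (t : ℝ) :
    ∫⁻ ω, ENNReal.ofReal (Z₁ ω + Z₂ ω - t) ∂ν
      = ∫⁻ s : ℝ, ν {ω | t - Z₂ ω < s ∧ s < Z₁ ω} ∂(volume : Measure ℝ) := by
  set M : Set (Ω × ℝ) := {p | t - Z₂ p.1 < p.2 ∧ p.2 < Z₁ p.1} with hM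
  have hMmeas : MeasurableSet M := by
    apply MeasurableSet.inter
    · exact measurableSet_lt ((measurable_const.sub (h2.comp measurable_fst))) measurable_snd
    · exact measurableSet_lt measurable_snd (h1.comp measurable_fst)
  have hunc : Measurable (Set.indicator M (fun _ => (1 : ℝ≥0∞))) :=
    measurable_const.indicator hMmeas
  have hswap := lintegral_lintegral_swap (μ := ν) (ν := (volume : Measure ℝ))
    (f := fun ω s => Set.indicator M (fun _ => (1 : ℝ≥0∞)) (ω, s)) hunc.aemeasurable
  have einner : ∀ ω, (∫⁻ s : ℝ, Set.indicator M (fun _ => (1 : ℝ≥0∞)) (ω, s)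
      ∂(volume : Measure ℝ)) = ENNReal.ofReal (Z₁ ω + Z₂ ω - t) := by
    intro ω
    have eset : ∀ s : ℝ, Set.indicator M (fun _ => (1 : ℝ≥0∞)) (ω, s)
        = Set.indicator (Set.Ioo (t - Z₂ ω) (Z₁ ω)) (fun _ => (1 : ℝ≥0∞)) s := by
      intro s
      by_cases hs : (ω, s) ∈ M
      · rw [Set.indicator_of_mem hs, Set.indicator_of_mem]
        exact ⟨hs.1, hs.2⟩
      · rw [Set.indicator_of_notMem hs, Set.indicator_of_notMem]
        intro hmem
        exact hs ⟨hmem.1, hmem.2⟩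
    simp_rw [eset]
    rw [lintegral_indicator_const measurableSet_Ioo, one_mul, Real.volume_Ioo]
    congr 1
    ring
  have eouter : ∀ s : ℝ, ∫⁻ ω, Set.indicator M (fun _ => (1 : ℝ≥0∞)) (ω, s) ∂ν
      = ν {ω | t - Z₂ ω < s ∧ s < Z₁ ω} := by
    intro s
    have eset : ∀ ω, Set.indicator M (fun _ => (1 : ℝ≥0∞)) (ω, s)
        = Set.indicator {ω | t - Z₂ ω < s ∧ s < Z₁ ω} (fun _ => (1 : ℝ≥0∞)) ω := by
      intro ω
      by_cases hs : (ω, s) ∈ M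
      · rw [Set.indicator_of_mem hs, Set.indicator_of_mem]
        exact ⟨hs.1, hs.2⟩
      · rw [Set.indicator_of_notMem hs, Set.indicator_of_notMem]
        intro hmem
        exact hs ⟨hmem.1, hmem.2⟩
    simp_rw [eset]
    have hsetmeas : MeasurableSet {ω | t - Z₂ ω < s ∧ s < Z₁ ω} := by
      apply MeasurableSet.inter
      · exact measurableSet_lt (measurable_const.sub h2) measurable_const
      · exact measurableSet_lt measurable_const h1
    rw [lintegral_indicator_const hsetmeas, one_mul]
  calc ∫⁻ ω, ENNReal.ofReal (Z₁ ω + Z₂ ω - t) ∂ν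
      = ∫⁻ ω, (∫⁻ s : ℝ, Set.indicator M (fun _ => (1 : ℝ≥0∞)) (ω, s)
          ∂(volume : Measure ℝ)) ∂ν := by
        refine lintegral_congr (fun ω => (einner ω).symm)
    _ = ∫⁻ s : ℝ, (∫⁻ ω, Set.indicator M (fun _ => (1 : ℝ≥0∞)) (ω, s) ∂ν)
          ∂(volume : Measure ℝ) := hswap
    _ = ∫⁻ s : ℝ, ν {ω | t - Z₂ ω < s ∧ s < Z₁ ω} ∂(volume : Measure ℝ) := by
        refine lintegral_congr (fun s => eouter s)

end uApp

section gfun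
variable {Ω : Type*} [MeasurableSpace Ω] {μ : Measure Ω} [IsProbabilityMeasure μ]
variable {Y : Ω → ℝ}

lemma g_nonneg (Y : Ω → ℝ) (t b : ℝ) : 0 ≤ ∫ ω, max (Y ω + b - t) 0 ∂μ :=
  integral_nonneg (fun ω => le_max_right _ _)

lemma g_lipschitz (hY : Integrable Y μ) (t : ℝ) :
    LipschitzWith 1 (fun b => ∫ ω, max (Y ω + b - t) 0 ∂μ) := by
  apply LipschitzWith.of_dist_le_mul
  intro b₁ b₂
  rw [Real.dist_eq, Real.dist_eq, NNReal.coe_one, one_mul]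
  have hint : ∀ b : ℝ, Integrable (fun ω => max (Y ω + b - t) 0) μ := by
    intro b
    have h0 : Integrable (fun ω => Y ω + b) μ := hY.add (integrable_const b)
    have : Integrable (fun ω => Y ω + b - t) μ := h0.sub (integrable_const t)
    exact this.pos_part
  rw [← integral_sub (hint b₁) (hint b₂)]
  calc |∫ ω, (max (Y ω + b₁ - t) 0 - max (Y ω + b₂ - t) 0) ∂μ|
      ≤ ∫ ω, |max (Y ω + b₁ - t) 0 - max (Y ω + b₂ - t) 0| ∂μ := by
        have := norm_integral_le_integral_norm
          (μ := μ) (f := fun ω => max (Y ω + b₁ - t) 0 - max (Y ω + b₂ - t) 0)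
        simpa [Real.norm_eq_abs] using this
    _ ≤ ∫ (_ : Ω), |b₁ - b₂| ∂μ := by
        apply integral_mono ((hint b₁).sub (hint b₂)).abs (integrable_const _)
        intro ω
        calc |max (Y ω + b₁ - t) 0 - max (Y ω + b₂ - t) 0|
            ≤ |(Y ω + b₁ - t) - (Y ω + b₂ - t)| := abs_max_sub_max_le_abs _ _ _
          _ = |b₁ - b₂| := by congr 1; ring
    _ = |b₁ - b₂| := by simp [measure_univ]

lemma g_le (hY : Integrable Y μ) (t b : ℝ) :
    ∫ ω, max (Y ω + b - t) 0 ∂μ ≤ (∫ ω, |Y ω| ∂μ) + (|t| + |b|) := by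
  have hint : Integrable (fun ω => max (Y ω + b - t) 0) μ := by
    have h0 : Integrable (fun ω => Y ω + b) μ := hY.add (integrable_const b)
    have h1 : Integrable (fun ω => Y ω + b - t) μ := h0.sub (integrable_const t)
    exact h1.pos_part
  calc ∫ ω, max (Y ω + b - t) 0 ∂μ
      ≤ ∫ ω, (|Y ω| + (|t| + |b|)) ∂μ := by
        have hbd : Integrable (fun ω => |Y ω| + (|t| + |b|)) μ :=
          hY.abs.add (integrable_const _)
        apply integral_mono hint hbd
        intro ω
        dsimp only
        apply max_le
        · have h1 : Y ω ≤ |Y ω| := le_abs_self _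
          have h2 : b ≤ |b| := le_abs_self _
          have h3 : -t ≤ |t| := neg_le_abs _
          linarith
        · positivity
    _ = (∫ ω, |Y ω| ∂μ) + (|t| + |b|) := by
        rw [integral_add hY.abs (integrable_const _)]
        simp [measure_univ]

lemma g_convexOn (hY : Integrable Y μ) (t : ℝ) :
    ConvexOn ℝ Set.univ (fun b => ∫ ω, max (Y ω + b - t) 0 ∂μ) := by
  have hint : ∀ b : ℝ, Integrable (fun ω => max (Y ω + b - t) 0) μ := by
    intro b
    have h0 : Integrable (fun ω => Y ω + b) μ := hY.add (integrable_const b)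
    have h1 : Integrable (fun ω => Y ω + b - t) μ := h0.sub (integrable_const t)
    exact h1.pos_part
  refine ⟨convex_univ, fun x _ y _ p q hp hq hpq => ?_⟩
  simp only [smul_eq_mul]
  have hpt : ∀ ω, max (Y ω + (p * x + q * y) - t) 0
      ≤ p * max (Y ω + x - t) 0 + q * max (Y ω + y - t) 0 := by
    intro ω
    apply max_le
    · have e : Y ω + (p * x + q * y) - t = p * (Y ω + x - t) + q * (Y ω + y - t) := by
        linear_combination (t - Y ω) * hpq
      rw [e]
      have h1 : p * (Y ω + x - t) ≤ p * max (Y ω + x - t) 0 :=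
        mul_le_mul_of_nonneg_left (le_max_left _ _) hp
      have h2 : q * (Y ω + y - t) ≤ q * max (Y ω + y - t) 0 :=
        mul_le_mul_of_nonneg_left (le_max_left _ _) hq
      linarith
    · have h1 : 0 ≤ p * max (Y ω + x - t) 0 := by positivity
      have h2 : 0 ≤ q * max (Y ω + y - t) 0 := by positivity
      linarith
  calc ∫ ω, max (Y ω + (p * x + q * y) - t) 0 ∂μ
      ≤ ∫ ω, (p * max (Y ω + x - t) 0 + q * max (Y ω + y - t) 0) ∂μ := by
        have hbd : Integrable (fun ω => p * max (Y ω + x - t) 0 + q * max (Y ω + y - t) 0) μ :=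
          ((hint x).const_mul p).add ((hint y).const_mul q)
        exact integral_mono (hint _) hbd hpt
    _ = p * ∫ ω, max (Y ω + x - t) 0 ∂μ + q * ∫ ω, max (Y ω + y - t) 0 ∂μ := by
        rw [integral_add ((hint x).const_mul p) ((hint y).const_mul q),
          integral_const_mul, integral_const_mul]

end gfun

theorem nqd_add_concaveOrdGE'
    {Ω : Type*} [MeasurableSpace Ω] (μ : Measure Ω) [IsProbabilityMeasure μ]
    (X₁ X₂ Y₁ Y₂ : Ω → ℝ)
    (hX₁ : Integrable X₁ μ) (hX₂ : Integrable X₂ μ)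
    (hY₁ : Integrable Y₁ μ) (hY₂ : Integrable Y₂ μ)
    (hNQD : ∀ x y : ℝ, μ {ω | X₁ ω ≤ x ∧ X₂ ω ≤ y} ≤ μ {ω | X₁ ω ≤ x} * μ {ω | X₂ ω ≤ y})
    (hind : ProbabilityTheory.IndepFun Y₁ Y₂ μ)
    (hcv₁ : ∀ u : ℝ → ℝ, ConcaveOn ℝ Set.univ u →
      Integrable (fun ω => u (X₁ ω)) μ → Integrable (fun ω => u (Y₁ ω)) μ →
      (∫ ω, u (Y₁ ω) ∂μ) ≤ ∫ ω, u (X₁ ω) ∂μ)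
    (hcv₂ : ∀ u : ℝ → ℝ, ConcaveOn ℝ Set.univ u →
      Integrable (fun ω => u (X₂ ω)) μ → Integrable (fun ω => u (Y₂ ω)) μ →
      (∫ ω, u (Y₂ ω) ∂μ) ≤ ∫ ω, u (X₂ ω) ∂μ)
    (u : ℝ → ℝ) (hu : ConcaveOn ℝ Set.univ u)
    (huX : Integrable (fun ω => u (X₁ ω + X₂ ω)) μ)
    (huY : Integrable (fun ω => u (Y₁ ω + Y₂ ω)) μ) :
    (∫ ω, u (Y₁ ω + Y₂ ω) ∂μ) ≤ ∫ ω, u (X₁ ω + X₂ ω) ∂μ := by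
  classical
  obtain ⟨m₁, hm₁s, he₁⟩ : ∃ m, StronglyMeasurable m ∧ X₁ =ᵐ[μ] m :=
    ⟨hX₁.1.mk X₁, hX₁.1.stronglyMeasurable_mk, hX₁.1.ae_eq_mk⟩
  obtain ⟨m₂, hm₂s, he₂⟩ : ∃ m, StronglyMeasurable m ∧ X₂ =ᵐ[μ] m :=
    ⟨hX₂.1.mk X₂, hX₂.1.stronglyMeasurable_mk, hX₂.1.ae_eq_mk⟩
  obtain ⟨n₁, hn₁s, hf₁⟩ : ∃ m, StronglyMeasurable m ∧ Y₁ =ᵐ[μ] m :=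
    ⟨hY₁.1.mk Y₁, hY₁.1.stronglyMeasurable_mk, hY₁.1.ae_eq_mk⟩
  obtain ⟨n₂, hn₂s, hf₂⟩ : ∃ m, StronglyMeasurable m ∧ Y₂ =ᵐ[μ] m :=
    ⟨hY₂.1.mk Y₂, hY₂.1.stronglyMeasurable_mk, hY₂.1.ae_eq_mk⟩
  have hm₁ : Measurable m₁ := hm₁s.measurable
  have hm₂ : Measurable m₂ := hm₂s.measurable
  have hn₁ : Measurable n₁ := hn₁s.measurable
  have hn₂ : Measurable n₂ := hn₂s.measurable
  have im₁ : Integrable m₁ μ := hX₁.congr he₁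
  have im₂ : Integrable m₂ μ := hX₂.congr he₂
  have in₁ : Integrable n₁ μ := hY₁.congr hf₁
  have in₂ : Integrable n₂ μ := hY₂.congr hf₂
  have heS : (fun ω => X₁ ω + X₂ ω) =ᵐ[μ] (fun ω => m₁ ω + m₂ ω) := he₁.add he₂
  have heT : (fun ω => Y₁ ω + Y₂ ω) =ᵐ[μ] (fun ω => n₁ ω + n₂ ω) := hf₁.add hf₂
  -- equality of means
  have hid : ConcaveOn ℝ Set.univ (fun x : ℝ => x) := by
    have := affine_concaveOn 1 0
    simpa using this
  have hnegid : ConcaveOn ℝ Set.univ (fun x : ℝ => -x) := by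
    have := affine_concaveOn (-1) 0
    have e : (fun x : ℝ => -1 * x + 0) = (fun x : ℝ => -x) := by funext x; ring
    rwa [e] at this
  have hmean₁ : ∫ ω, X₁ ω ∂μ = ∫ ω, Y₁ ω ∂μ := by
    have h1 : (∫ ω, Y₁ ω ∂μ) ≤ ∫ ω, X₁ ω ∂μ := hcv₁ _ hid hX₁ hY₁
    have h2 : (∫ ω, -Y₁ ω ∂μ) ≤ ∫ ω, -X₁ ω ∂μ := hcv₁ _ hnegid hX₁.neg hY₁.neg
    rw [integral_neg, integral_neg] at h2
    linarith
  have hmean₂ : ∫ ω, X₂ ω ∂μ = ∫ ω, Y₂ ω ∂μ := by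
    have h1 : (∫ ω, Y₂ ω ∂μ) ≤ ∫ ω, X₂ ω ∂μ := hcv₂ _ hid hX₂ hY₂
    have h2 : (∫ ω, -Y₂ ω ∂μ) ≤ ∫ ω, -X₂ ω ∂μ := hcv₂ _ hnegid hX₂.neg hY₂.neg
    rw [integral_neg, integral_neg] at h2
    linarith
  have hmean : ∫ ω, (m₁ ω + m₂ ω) ∂μ = ∫ ω, (n₁ ω + n₂ ω) ∂μ := by
    rw [integral_add im₁ im₂, integral_add in₁ in₂,
      ← integral_congr_ae he₁, ← integral_congr_ae he₂,
      ← integral_congr_ae hf₁, ← integral_congr_ae hf₂, hmean₁, hmean₂]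
  -- stop-loss comparison
  have hsl : ∀ t : ℝ, (∫ ω, max (m₁ ω + m₂ ω - t) 0 ∂μ)
      ≤ ∫ ω, max (n₁ ω + n₂ ω - t) 0 ∂μ := by
    intro t
    set g : ℝ → ℝ := fun b => ∫ ω, max (Y₁ ω + b - t) 0 ∂μ with hgdef
    have hgl : LipschitzWith 1 g := g_lipschitz hY₁ t
    have hgm : Measurable g := hgl.continuous.measurable
    -- integrability of positive parts
    have iS : Integrable (fun ω => max (m₁ ω + m₂ ω - t) 0) μ := by
      have h0 : Integrable (fun ω => m₁ ω + m₂ ω - t) μ := (im₁.add im₂).sub (integrable_const t)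
      exact h0.pos_part
    have iT : Integrable (fun ω => max (n₁ ω + n₂ ω - t) 0) μ := by
      have h0 : Integrable (fun ω => n₁ ω + n₂ ω - t) μ := (in₁.add in₂).sub (integrable_const t)
      exact h0.pos_part
    -- Step A : move to lintegral
    have stepA : ENNReal.ofReal (∫ ω, max (m₁ ω + m₂ ω - t) 0 ∂μ)
        = ∫⁻ ω, ENNReal.ofReal (m₁ ω + m₂ ω - t) ∂μ := by
      rw [ofReal_integral_eq_lintegral_ofReal iS
        (Filter.Eventually.of_forall (fun ω => le_max_right _ _))]
      exact lintegral_congr (fun ω => ofReal_max_zero _)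
    -- Step B : layer cake on μ
    have stepB := layer_cake μ hm₁ hm₂ t
    -- Step C : NQD bound pointwise in s
    have stepC : ∀ s : ℝ, μ {ω | t - m₂ ω < s ∧ s < m₁ ω}
        ≤ μ {ω | s < m₁ ω} * μ {ω | t - s < m₂ ω} := by
      intro s
      have hA : MeasurableSet {ω | s < m₁ ω} := measurableSet_lt measurable_const hm₁
      have hB : MeasurableSet {ω | t - s < m₂ ω} := measurableSet_lt measurable_const hm₂
      have hset : {ω | t - m₂ ω < s ∧ s < m₁ ω} = {ω | s < m₁ ω} ∩ {ω | t - s < m₂ ω} := by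
        ext ω
        simp only [Set.mem_setOf_eq, Set.mem_inter_iff]
        constructor
        · rintro ⟨h1, h2⟩; exact ⟨h2, by linarith⟩
        · rintro ⟨h1, h2⟩; exact ⟨by linarith, h1⟩
      rw [hset]
      apply nqd_flip μ hA hB
      have hc1 : {ω | s < m₁ ω}ᶜ = {ω | m₁ ω ≤ s} := by
        ext ω; simp [not_lt]
      have hc2 : {ω | t - s < m₂ ω}ᶜ = {ω | m₂ ω ≤ t - s} := by
        ext ω; simp [not_lt]
      rw [hc1, hc2]
      have e1 : μ {ω | m₁ ω ≤ s ∧ m₂ ω ≤ t - s} = μ {ω | X₁ ω ≤ s ∧ X₂ ω ≤ t - s} := by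
        apply measure_congr
        rw [Filter.eventuallyEq_set]
        filter_upwards [he₁, he₂] with ω h1 h2
        simp only [Set.mem_setOf_eq, h1, h2]
      have e2 : μ {ω | m₁ ω ≤ s} = μ {ω | X₁ ω ≤ s} := by
        apply measure_congr
        rw [Filter.eventuallyEq_set]
        filter_upwards [he₁] with ω h1
        simp only [Set.mem_setOf_eq, h1]
      have e3 : μ {ω | m₂ ω ≤ t - s} = μ {ω | X₂ ω ≤ t - s} := by
        apply measure_congr
        rw [Filter.eventuallyEq_set]
        filter_upwards [he₂] with ω h2
        simp only [Set.mem_setOf_eq, h2]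
      have hinter : {ω | m₁ ω ≤ s} ∩ {ω | m₂ ω ≤ t - s} = {ω | m₁ ω ≤ s ∧ m₂ ω ≤ t - s} := rfl
      rw [hinter, e1, e2, e3]
      exact hNQD s (t - s)
    -- Step D : product layer cake
    have stepD : (∫⁻ s : ℝ, μ {ω | s < m₁ ω} * μ {ω | t - s < m₂ ω} ∂(volume : Measure ℝ))
        = ∫⁻ p, ENNReal.ofReal (m₁ p.1 + m₂ p.2 - t) ∂(μ.prod μ) := by
      have := layer_cake (μ.prod μ) (Z₁ := fun p : Ω × Ω => m₁ p.1)
        (Z₂ := fun p : Ω × Ω => m₂ p.2) (hm₁.comp measurable_fst) (hm₂.comp measurable_snd) t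
      rw [this]
      refine lintegral_congr (fun s => ?_)
      have hset : {p : Ω × Ω | t - m₂ p.2 < s ∧ s < m₁ p.1}
          = {ω | s < m₁ ω} ×ˢ {ω | t - s < m₂ ω} := by
        ext p
        simp only [Set.mem_setOf_eq, Set.mem_prod]
        constructor
        · rintro ⟨h1, h2⟩; exact ⟨h2, by linarith⟩
        · rintro ⟨h1, h2⟩; exact ⟨by linarith, h1⟩
      rw [hset, Measure.prod_prod]
    -- Step E : iterated integral
    have hofmeas : Measurable (fun p : Ω × Ω => ENNReal.ofReal (m₁ p.1 + m₂ p.2 - t)) :=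
      ENNReal.measurable_ofReal.comp
        (((hm₁.comp measurable_fst).add (hm₂.comp measurable_snd)).sub measurable_const)
    have stepE : (∫⁻ p, ENNReal.ofReal (m₁ p.1 + m₂ p.2 - t) ∂(μ.prod μ))
        = ∫⁻ ω₂, ∫⁻ ω₁, ENNReal.ofReal (m₁ ω₁ + m₂ ω₂ - t) ∂μ ∂μ :=
      lintegral_prod_symm' _ hofmeas
    -- Step F : inner comparison via hcv₁
    have stepF : ∀ b : ℝ, (∫⁻ ω, ENNReal.ofReal (m₁ ω + b - t) ∂μ) ≤ ENNReal.ofReal (g b) := by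
      intro b
      have isub : ∀ x : ℝ, x - (t - b) = x + b - t := fun x => by ring
      have im : Integrable (fun ω => max (m₁ ω + b - t) 0) μ := by
        have h0 : Integrable (fun ω => m₁ ω + b) μ := im₁.add (integrable_const b)
        have h1 : Integrable (fun ω => m₁ ω + b - t) μ := h0.sub (integrable_const t)
        exact h1.pos_part
      have iX : Integrable (fun ω => max (X₁ ω + b - t) 0) μ := by
        have h0 : Integrable (fun ω => X₁ ω + b) μ := hX₁.add (integrable_const b)
        have h1 : Integrable (fun ω => X₁ ω + b - t) μ := h0.sub (integrable_const t)
        exact h1.pos_part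
      have iY : Integrable (fun ω => max (Y₁ ω + b - t) 0) μ := by
        have h0 : Integrable (fun ω => Y₁ ω + b) μ := hY₁.add (integrable_const b)
        have h1 : Integrable (fun ω => Y₁ ω + b - t) μ := h0.sub (integrable_const t)
        exact h1.pos_part
      have hconc : ConcaveOn ℝ Set.univ (fun x : ℝ => -max (x - (t - b)) 0) :=
        (posPart_convexOn (t - b)).neg
      have hXint : Integrable (fun ω => -max (X₁ ω - (t - b)) 0) μ := by
        have : Integrable (fun ω => max (X₁ ω - (t - b)) 0) μ := by
          simp_rw [isub]; exact iX
        exact this.neg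
      have hYint : Integrable (fun ω => -max (Y₁ ω - (t - b)) 0) μ := by
        have : Integrable (fun ω => max (Y₁ ω - (t - b)) 0) μ := by
          simp_rw [isub]; exact iY
        exact this.neg
      have hres := hcv₁ _ hconc hXint hYint
      rw [integral_neg, integral_neg, neg_le_neg_iff] at hres
      simp_rw [isub] at hres
      calc (∫⁻ ω, ENNReal.ofReal (m₁ ω + b - t) ∂μ)
          = ∫⁻ ω, ENNReal.ofReal (max (m₁ ω + b - t) 0) ∂μ :=
            (lintegral_congr (fun ω => ofReal_max_zero _)).symm
        _ = ENNReal.ofReal (∫ ω, max (m₁ ω + b - t) 0 ∂μ) :=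
            (ofReal_integral_eq_lintegral_ofReal im
              (Filter.Eventually.of_forall (fun ω => le_max_right _ _))).symm
        _ = ENNReal.ofReal (∫ ω, max (X₁ ω + b - t) 0 ∂μ) := by
            congr 1
            apply integral_congr_ae
            filter_upwards [he₁] with ω h1
            rw [h1]
        _ ≤ ENNReal.ofReal (g b) := ENNReal.ofReal_le_ofReal hres
    -- integrability of g ∘ m₂, g ∘ X₂, g ∘ Y₂
    have hgcomp : ∀ (Z : Ω → ℝ), Integrable Z μ → AEStronglyMeasurable Z μ →
        Integrable (fun ω => g (Z ω)) μ := by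
      intro Z hZ hZm
      refine Integrable.mono' ((integrable_const ((∫ ω, |Y₁ ω| ∂μ) + |t|)).add hZ.abs)
        (hgl.continuous.comp_aestronglyMeasurable hZm) ?_
      refine Filter.Eventually.of_forall (fun ω => ?_)
      have h1 : 0 ≤ g (Z ω) := g_nonneg Y₁ t (Z ω)
      have h2 := g_le hY₁ t (Z ω)
      rw [Real.norm_eq_abs, abs_of_nonneg h1]
      calc g (Z ω) ≤ (∫ ω, |Y₁ ω| ∂μ) + (|t| + |Z ω|) := h2
        _ = (∫ ω, |Y₁ ω| ∂μ) + |t| + |Z ω| := by ring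
    have igm₂ : Integrable (fun ω => g (m₂ ω)) μ := hgcomp m₂ im₂ hm₂s.aestronglyMeasurable
    have igX₂ : Integrable (fun ω => g (X₂ ω)) μ := hgcomp X₂ hX₂ hX₂.1
    have igY₂ : Integrable (fun ω => g (Y₂ ω)) μ := hgcomp Y₂ hY₂ hY₂.1
    -- Step H : outer comparison via hcv₂
    have stepH : (∫ ω, g (m₂ ω) ∂μ) ≤ ∫ ω, g (Y₂ ω) ∂μ := by
      have hconc : ConcaveOn ℝ Set.univ (fun x : ℝ => -g x) := (g_convexOn hY₁ t).neg
      have hres := hcv₂ _ hconc igX₂.neg igY₂.neg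
      rw [integral_neg, integral_neg, neg_le_neg_iff] at hres
      have e : (∫ ω, g (m₂ ω) ∂μ) = ∫ ω, g (X₂ ω) ∂μ := by
        apply integral_congr_ae
        filter_upwards [he₂] with ω h2
        rw [h2]
      rw [e]
      exact hres
    -- Step G : conclude the lintegral chain up to g∘Y₂
    have stepG : (∫⁻ ω, ENNReal.ofReal (m₁ ω + m₂ ω - t) ∂μ)
        ≤ ENNReal.ofReal (∫ ω, g (Y₂ ω) ∂μ) := by
      calc (∫⁻ ω, ENNReal.ofReal (m₁ ω + m₂ ω - t) ∂μ)
          = ∫⁻ s : ℝ, μ {ω | t - m₂ ω < s ∧ s < m₁ ω} ∂(volume : Measure ℝ) := stepB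
        _ ≤ ∫⁻ s : ℝ, μ {ω | s < m₁ ω} * μ {ω | t - s < m₂ ω} ∂(volume : Measure ℝ) :=
            lintegral_mono (fun s => stepC s)
        _ = ∫⁻ p, ENNReal.ofReal (m₁ p.1 + m₂ p.2 - t) ∂(μ.prod μ) := stepD
        _ = ∫⁻ ω₂, ∫⁻ ω₁, ENNReal.ofReal (m₁ ω₁ + m₂ ω₂ - t) ∂μ ∂μ := stepE
        _ ≤ ∫⁻ ω₂, ENNReal.ofReal (g (m₂ ω₂)) ∂μ := lintegral_mono (fun ω₂ => stepF (m₂ ω₂))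
        _ = ENNReal.ofReal (∫ ω, g (m₂ ω) ∂μ) :=
            (ofReal_integral_eq_lintegral_ofReal igm₂
              (Filter.Eventually.of_forall (fun ω => g_nonneg Y₁ t (m₂ ω)))).symm
        _ ≤ ENNReal.ofReal (∫ ω, g (Y₂ ω) ∂μ) := ENNReal.ofReal_le_ofReal stepH
    -- Step I : identify ∫ g∘Y₂ with the stop-loss of Y₁+Y₂ via independence
    have hY₁a : AEMeasurable Y₁ μ := hY₁.1.aemeasurable
    have hY₂a : AEMeasurable Y₂ μ := hY₂.1.aemeasurable
    have hmap : Measure.map (fun ω => (Y₁ ω, Y₂ ω)) μ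
        = (Measure.map Y₁ μ).prod (Measure.map Y₂ μ) :=
      (ProbabilityTheory.indepFun_iff_map_prod_eq_prod_map_map hY₁a hY₂a).mp hind
    haveI : IsProbabilityMeasure (Measure.map Y₁ μ) := Measure.isProbabilityMeasure_map hY₁a
    haveI : IsProbabilityMeasure (Measure.map Y₂ μ) := Measure.isProbabilityMeasure_map hY₂a
    have hofm2 : Measurable (fun p : ℝ × ℝ => ENNReal.ofReal (p.1 + p.2 - t)) :=
      ENNReal.measurable_ofReal.comp ((measurable_fst.add measurable_snd).sub measurable_const)
    have iYY : Integrable (fun ω => max (Y₁ ω + Y₂ ω - t) 0) μ := by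
      have h0 : Integrable (fun ω => Y₁ ω + Y₂ ω - t) μ := (hY₁.add hY₂).sub (integrable_const t)
      exact h0.pos_part
    have stepI : ENNReal.ofReal (∫ ω, g (Y₂ ω) ∂μ)
        = ENNReal.ofReal (∫ ω, max (Y₁ ω + Y₂ ω - t) 0 ∂μ) := by
      have e1 : ENNReal.ofReal (∫ ω, g (Y₂ ω) ∂μ) = ∫⁻ ω, ENNReal.ofReal (g (Y₂ ω)) ∂μ :=
        ofReal_integral_eq_lintegral_ofReal igY₂
          (Filter.Eventually.of_forall (fun ω => g_nonneg Y₁ t (Y₂ ω)))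
      have e2 : ENNReal.ofReal (∫ ω, max (Y₁ ω + Y₂ ω - t) 0 ∂μ)
          = ∫⁻ ω, ENNReal.ofReal (Y₁ ω + Y₂ ω - t) ∂μ := by
        rw [ofReal_integral_eq_lintegral_ofReal iYY
          (Filter.Eventually.of_forall (fun ω => le_max_right _ _))]
        exact lintegral_congr (fun ω => ofReal_max_zero _)
      have e3 : (∫⁻ ω, ENNReal.ofReal (Y₁ ω + Y₂ ω - t) ∂μ)
          = ∫⁻ p, ENNReal.ofReal (p.1 + p.2 - t) ∂((Measure.map Y₁ μ).prod (Measure.map Y₂ μ)) := by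
        rw [← hmap]
        exact (lintegral_map' hofm2.aemeasurable (hY₁a.prodMk hY₂a)).symm
      have e4 : (∫⁻ p, ENNReal.ofReal (p.1 + p.2 - t)
            ∂((Measure.map Y₁ μ).prod (Measure.map Y₂ μ)))
          = ∫⁻ b, ∫⁻ a, ENNReal.ofReal (a + b - t) ∂(Measure.map Y₁ μ) ∂(Measure.map Y₂ μ) :=
        lintegral_prod_symm' _ hofm2
      have e5 : ∀ b : ℝ, (∫⁻ a, ENNReal.ofReal (a + b - t) ∂(Measure.map Y₁ μ))
          = ENNReal.ofReal (g b) := by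
        intro b
        have iY : Integrable (fun ω => max (Y₁ ω + b - t) 0) μ := by
          have h0 : Integrable (fun ω => Y₁ ω + b) μ := hY₁.add (integrable_const b)
          have h1 : Integrable (fun ω => Y₁ ω + b - t) μ := h0.sub (integrable_const t)
          exact h1.pos_part
        have hmb : Measurable (fun a : ℝ => ENNReal.ofReal (a + b - t)) :=
          ENNReal.measurable_ofReal.comp ((measurable_id.add measurable_const).sub
            measurable_const)
        rw [lintegral_map' hmb.aemeasurable hY₁a]
        calc (∫⁻ ω, ENNReal.ofReal (Y₁ ω + b - t) ∂μ)
            = ∫⁻ ω, ENNReal.ofReal (max (Y₁ ω + b - t) 0) ∂μ :=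
              (lintegral_congr (fun ω => ofReal_max_zero _)).symm
          _ = ENNReal.ofReal (g b) :=
              (ofReal_integral_eq_lintegral_ofReal iY
                (Filter.Eventually.of_forall (fun ω => le_max_right _ _))).symm
      have e6 : (∫⁻ b, ∫⁻ a, ENNReal.ofReal (a + b - t) ∂(Measure.map Y₁ μ) ∂(Measure.map Y₂ μ))
          = ∫⁻ b, ENNReal.ofReal (g b) ∂(Measure.map Y₂ μ) :=
        lintegral_congr (fun b => e5 b)
      have e7 : (∫⁻ b, ENNReal.ofReal (g b) ∂(Measure.map Y₂ μ))
          = ∫⁻ ω, ENNReal.ofReal (g (Y₂ ω)) ∂μ :=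
        lintegral_map' (ENNReal.measurable_ofReal.comp hgm).aemeasurable hY₂a
      rw [e1, e2, e3, e4, e6, e7]
    -- put everything together
    have chain : ENNReal.ofReal (∫ ω, max (m₁ ω + m₂ ω - t) 0 ∂μ)
        ≤ ENNReal.ofReal (∫ ω, max (n₁ ω + n₂ ω - t) 0 ∂μ) := by
      rw [stepA]
      refine le_trans stepG ?_
      rw [stepI]
      apply ENNReal.ofReal_le_ofReal
      apply le_of_eq
      apply integral_congr_ae
      filter_upwards [hf₁, hf₂] with ω h1 h2
      rw [h1, h2]
    exact (ENNReal.ofReal_le_ofReal_iff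
      (integral_nonneg (fun ω => le_max_right _ _))).mp chain
  -- apply the key lemma
  have huS : Integrable (fun ω => u (m₁ ω + m₂ ω)) μ := by
    apply huX.congr
    filter_upwards [he₁, he₂] with ω h1 h2
    rw [h1, h2]
  have huT : Integrable (fun ω => u (n₁ ω + n₂ ω)) μ := by
    apply huY.congr
    filter_upwards [hf₁, hf₂] with ω h1 h2
    rw [h1, h2]
  have hkey := key_concave_order μ (hm₁.add hm₂) (hn₁.add hn₂)
    (im₁.add im₂) (in₁.add in₂) hmean hsl hu huS huT
  calc (∫ ω, u (Y₁ ω + Y₂ ω) ∂μ) = ∫ ω, u (n₁ ω + n₂ ω) ∂μ := by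
        apply integral_congr_ae
        filter_upwards [hf₁, hf₂] with ω h1 h2
        rw [h1, h2]
    _ ≤ ∫ ω, u (m₁ ω + m₂ ω) ∂μ := hkey
    _ = ∫ ω, u (X₁ ω + X₂ ω) ∂μ := by
        apply integral_congr_ae
        filter_upwards [he₁, he₂] with ω h1 h2
        rw [h1, h2]

end AuxNQD

/-- If `(X₁, X₂)` is NQD, `(Y₁, Y₂)` is independent,
`X₁ ≥_cv Y₁` and `X₂ ≥_cv Y₂`, then `X₁ + X₂ ≥_cv Y₁ + Y₂`. -/
theorem nqd_add_concaveOrdGE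
    {Ω : Type*} [MeasurableSpace Ω] (μ : Measure Ω) [IsProbabilityMeasure μ]
    (X₁ X₂ Y₁ Y₂ : Ω → ℝ)
    (hX₁ : Integrable X₁ μ) (hX₂ : Integrable X₂ μ)
    (hY₁ : Integrable Y₁ μ) (hY₂ : Integrable Y₂ μ)
    (hNQD : NQD μ X₁ X₂) (hind : IndepFun Y₁ Y₂ μ)
    (hcv₁ : ConcaveOrdGE' μ X₁ Y₁) (hcv₂ : ConcaveOrdGE' μ X₂ Y₂) :
    ConcaveOrdGE' μ (fun ω => X₁ ω + X₂ ω) (fun ω => Y₁ ω + Y₂ ω) := by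
  intro u hu huX huY
  exact nqd_add_concaveOrdGE' μ X₁ X₂ Y₁ Y₂ hX₁ hX₂ hY₁ hY₂ hNQD hind hcv₁ hcv₂ u hu huX huY
end
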